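/- arXiv:2105.04250 — 7 statements merged into one kernel-verified Lean document; each statement's English description precedes it below -/
import Mathlib

section
/- There is no infinite sequence (l0,k0,o0,t0), (l1,k1,o1,t1), ... of tuples in ℕ × ℕ × Bool × Bool such that for every i one of the following holds: (rule r1) li > 0 and l(i+1) < li (with k, o, t arbitrary); (rule r2) li = 0, ki > 0, l(i+1) = li, and k(i+1) < ki (with o, t arbitrary); (rule r3) li > 0, oi = false, o(i+1) = true, l(i+1) = li, and k(i+1) = ki (with t arbitrary); or (rule r4) li = 0, ti = false, t(i+1) = true, l(i+1) = li, and k(i+1) = ki (with o arbitrary). Hence the Grid sketch is terminating. -/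
/-- Every function `ℕ → ℕ` attains a minimum value. -/
lemma exists_min_nat (f : ℕ → ℕ) : ∃ N, ∀ m, f N ≤ f m := by
  obtain ⟨x, ⟨N, rfl⟩, hmin⟩ :=
    WellFounded.has_min Nat.lt_wfRel.wf (Set.range f) ⟨f 0, 0, rfl⟩
  exact ⟨N, fun m => not_lt.mp (hmin (f m) ⟨m, rfl⟩)⟩

/-- Termination of the Grid sketch with rules
`r1 = {l>0} ↦ {l↓, k?, o?, t?}`, `r2 = {l=0, k>0} ↦ {k↓, o?, t?}`,
`r3 = {l>0, ¬o} ↦ {o, t?}` and `r4 = {l=0, ¬t} ↦ {o?, t}`: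
there is no infinite sequence of feature valuations `(lᵢ, kᵢ, oᵢ, tᵢ)` in
`ℕ × ℕ × Bool × Bool` in which every consecutive pair satisfies one of the
four rules. -/
theorem grid_sketch_terminating :
    ¬ ∃ (l k : ℕ → ℕ) (o t : ℕ → Bool),
        ∀ i : ℕ,
          (0 < l i ∧ l (i + 1) < l i) ∨
          (l i = 0 ∧ 0 < k i ∧ l (i + 1) = l i ∧ k (i + 1) < k i) ∨
          (0 < l i ∧ o i = false ∧ o (i + 1) = true ∧
            l (i + 1) = l i ∧ k (i + 1) = k i) ∨
          (l i = 0 ∧ t i = false ∧ t (i + 1) = true ∧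
            l (i + 1) = l i ∧ k (i + 1) = k i) := by
  rintro ⟨l, k, o, t, h⟩
  -- l is nonincreasing
  have hl_anti : ∀ i, l (i + 1) ≤ l i := by
    intro i
    rcases h i with ⟨_, h2⟩ | ⟨_, _, h3, _⟩ | ⟨_, _, _, h4, _⟩ | ⟨_, _, _, h5, _⟩
    · exact le_of_lt h2
    · exact le_of_eq h3
    · exact le_of_eq h4
    · exact le_of_eq h5
  have hl_mono : ∀ i j, i ≤ j → l j ≤ l i :=
    fun i j hij => antitone_nat_of_succ_le hl_anti hij
  -- get index where l attains its minimum
  obtain ⟨N, hN⟩ := exists_min_nat l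
  have hl_const : ∀ i, N ≤ i → l i = l N :=
    fun i hi => le_antisymm (hl_mono N i hi) (hN i)
  -- from N on, l is constant, so r1 never applies and k is nonincreasing
  have hk_anti : ∀ i, N ≤ i → k (i + 1) ≤ k i := by
    intro i hi
    rcases h i with ⟨_, h2⟩ | ⟨_, _, _, h3⟩ | ⟨_, _, _, _, h4⟩ | ⟨_, _, _, _, h5⟩
    · exact absurd h2 (by rw [hl_const i hi, hl_const (i + 1) (le_trans hi (Nat.le_succ i))]; exact lt_irrefl _)
    · exact le_of_lt h3
    · exact le_of_eq h4
    · exact le_of_eq h5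
  -- minimize k over the tail starting at N
  obtain ⟨J, hJ⟩ := exists_min_nat (fun j => k (N + j))
  set M := N + J with hM
  have hNM : N ≤ M := Nat.le_add_right N J
  have hk_mono : ∀ i j, M ≤ i → i ≤ j → k j ≤ k i := by
    intro i j hi hij
    induction j with
    | zero => have : i = 0 := Nat.le_zero.mp hij; subst this; exact le_rfl
    | succ j ih =>
      rcases Nat.lt_or_ge i (j + 1) with hlt | hge
      · exact le_trans (hk_anti j (by omega)) (ih (by omega))
      · have : i = j + 1 := by omega
        subst this; exact le_rfl
  have hk_const : ∀ i, M ≤ i → k i = k M := by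
    intro i hi
    refine le_antisymm (hk_mono M i le_rfl hi) ?_
    have := hJ (i - N)
    simpa [hM, Nat.add_sub_cancel' (le_trans hNM hi)] using this
  -- at indices ≥ M, l and k are constant, so only r3/r4 can apply
  have key : ∀ i, M ≤ i →
      (0 < l i ∧ o i = false ∧ o (i + 1) = true) ∨
      (l i = 0 ∧ t i = false ∧ t (i + 1) = true) := by
    intro i hi
    have hiN : N ≤ i := le_trans hNM hi
    have hl1 : l (i + 1) = l i := by
      rw [hl_const i hiN, hl_const (i + 1) (le_trans hiN (Nat.le_succ i))]
    have hk1 : k (i + 1) = k i := by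
      rw [hk_const i hi, hk_const (i + 1) (le_trans hi (Nat.le_succ i))]
    rcases h i with ⟨_, h2⟩ | ⟨_, _, _, h3⟩ | ⟨hp, ho, ho', _, _⟩ | ⟨hz, ht, ht', _, _⟩
    · omega
    · omega
    · exact Or.inl ⟨hp, ho, ho'⟩
    · exact Or.inr ⟨hz, ht, ht'⟩
  have hlM1 : l (M + 1) = l M := by
    rw [hl_const M hNM, hl_const (M + 1) (le_trans hNM (Nat.le_succ M))]
  rcases key M le_rfl with ⟨hp, _, ho'⟩ | ⟨hz, _, ht'⟩ <;>
    rcases key (M + 1) (Nat.le_succ M) with ⟨hp1, ho1, _⟩ | ⟨hz1, ht1, _⟩ <;>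
    simp_all
end

section
/- There is no infinite sequence (g0,u0,c1_0,c2_0), (g1,u1,c1_1,c2_1), ... of tuples in ℕ × ℕ × Bool × Bool such that for every i one of the following holds: (rule r1) c1_i = false, c1_(i+1) = true, g(i+1) = gi, c2_(i+1) = c2_i (with u arbitrary); (rule r2) c1_i = true, c2_i = false, c2_(i+1) = true, g(i+1) = gi, c1_(i+1) = c1_i (with u arbitrary); (rule r3) ui > 0, u(i+1) < ui, and g, c1, c2 unchanged; or (rule r4) gi > 0, g(i+1) < gi, u(i+1) = ui (with c1, c2 arbitrary). Hence the Barman sketch is terminating. -/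
/-- Termination of the Barman sketch with rules
`r1 = {¬c1} ↦ {u?, c1}`, `r2 = {c1, ¬c2} ↦ {u?, c2}`, `r3 = {u>0} ↦ {u↓}` and
`r4 = {g>0} ↦ {g↓, c1?, c2?}`: there is no infinite sequence of feature
valuations `(gᵢ, uᵢ, c1ᵢ, c2ᵢ)` in `ℕ × ℕ × Bool × Bool` in which every
consecutive pair satisfies one of the four rules. -/
theorem barman_sketch_terminating :
    ¬ ∃ (g u : ℕ → ℕ) (c1 c2 : ℕ → Bool),
        ∀ i : ℕ,
          (c1 i = false ∧ c1 (i + 1) = true ∧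
            g (i + 1) = g i ∧ c2 (i + 1) = c2 i) ∨
          (c1 i = true ∧ c2 i = false ∧ c2 (i + 1) = true ∧
            g (i + 1) = g i ∧ c1 (i + 1) = c1 i) ∨
          (0 < u i ∧ u (i + 1) < u i ∧ g (i + 1) = g i ∧
            c1 (i + 1) = c1 i ∧ c2 (i + 1) = c2 i) ∨
          (0 < g i ∧ g (i + 1) < g i ∧ u (i + 1) = u i) := by
  rintro ⟨g, u, c1, c2, h⟩
  set r : (ℕ × ℕ × ℕ) → (ℕ × ℕ × ℕ) → Prop :=
    Prod.Lex (· < ·) (Prod.Lex (· < ·) (· < ·)) with hr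
  have hwf : WellFounded r := by
    apply WellFounded.prod_lex Nat.lt_wfRel.wf
    exact WellFounded.prod_lex Nat.lt_wfRel.wf Nat.lt_wfRel.wf
  set F : ℕ → ℕ × ℕ × ℕ :=
    fun i => (g i, (bif c1 i then 0 else 1) + (bif c2 i then 0 else 1), u i) with hF
  have hdec : ∀ i, r (F (i + 1)) (F i) := by
    intro i
    rcases h i with ⟨h1, h2, h3, h4⟩ | ⟨h1, h2, h3, h4, h5⟩ | ⟨h1, h2, h3, h4, h5⟩ |
      ⟨h1, h2, h3⟩
    · simp only [hF, h1, h2, h3, h4]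
      exact Prod.Lex.right _ (Prod.Lex.left _ _ (by cases c2 i <;> simp))
    · simp only [hF, h1, h2, h3, h4, h5]
      exact Prod.Lex.right _ (Prod.Lex.left _ _ (by simp))
    · simp only [hF, h3, h4, h5]
      exact Prod.Lex.right _ (Prod.Lex.right _ h2)
    · exact Prod.Lex.left _ _ h2
  exact (RelEmbedding.natGT F hdec).not_acc 0 (hwf.apply _)
end

section
/- For every Barman instance P (with a single, initially empty shaker) and every R-reachable state s of P in which u(s) > 0 (some shot contains a beverage different from the one the goal specifies for it), the planning problem that is like P but with initial state s and with goal states G_{r3}(s) = { s' : u(s') < u(s), g(s') = g(s), c1(s') = c1(s), c2(s') = c2(s) } has width at most 1. -/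
attribute [local instance 0] Classical.propDecidable

/-! ## Classical planning problems, plans, and width -/

structure PlanningProblem : Type 1 where
  Atom : Type
  fintypeAtom : Fintype Atom
  Action : Type
  init : Atom → Bool
  goal : Set (Atom → Bool)
  applicable : (Atom → Bool) → Set Action
  succ : (Atom → Bool) → Action → (Atom → Bool)

namespace PlanningProblem

/-- States are truth valuations over the atoms. -/
abbrev State (P : PlanningProblem) : Type := P.Atom → Bool

/-- The number `N` of atoms of the problem. -/
noncomputable def numAtoms (P : PlanningProblem) : ℕ :=
  @Fintype.card P.Atom P.fintypeAtom

/-- `P.Exec s π s'` holds iff the action sequence `π` is applicable starting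
in state `s` and leads to the state `s'`. -/
inductive Exec (P : PlanningProblem) : P.State → List P.Action → P.State → Prop
  | nil (s : P.State) : Exec P s [] s
  | cons {s : P.State} {a : P.Action} {π : List P.Action} {s' : P.State} :
      a ∈ P.applicable s → Exec P (P.succ s a) π s' → Exec P s (a :: π) s'

/-- `π` is a plan from state `s` for the set of target states `T`. -/
def PlanFromFor (P : PlanningProblem) (s : P.State) (T : Set P.State)
    (π : List P.Action) : Prop :=
  ∃ s', P.Exec s π s' ∧ s' ∈ T

/-- `π` is an optimal (shortest) plan from `s` for `T`. -/
def OptimalFromFor (P : PlanningProblem) (s : P.State) (T : Set P.State)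
    (π : List P.Action) : Prop :=
  P.PlanFromFor s T π ∧ ∀ π', P.PlanFromFor s T π' → π.length ≤ π'.length

/-- The set of states making all atoms of the tuple `t` true. -/
def TupleStates (P : PlanningProblem) (t : Finset P.Atom) : Set P.State :=
  {s | ∀ a ∈ t, s a = true}

/-- An admissible chain `t₀, t₁, …, t_m` of atom tuples, each of size at most `k`:
`t₀` holds in the initial state, any optimal plan for `tᵢ` can be extended into an
optimal plan for `tᵢ₊₁` by adding a single action, and any optimal plan for `t_m`
is an optimal plan for the problem. -/
def IsAdmissibleChain (P : PlanningProblem) (k m : ℕ) (ts : ℕ → Finset P.Atom) : Prop :=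
  (∀ i ≤ m, (ts i).card ≤ k) ∧
  P.init ∈ P.TupleStates (ts 0) ∧
  (∀ i < m, ∀ π, P.OptimalFromFor P.init (P.TupleStates (ts i)) π →
      ∃ a, P.OptimalFromFor P.init (P.TupleStates (ts (i + 1))) (π ++ [a])) ∧
  (∀ π, P.OptimalFromFor P.init (P.TupleStates (ts m)) π →
      P.OptimalFromFor P.init P.goal π)

def Solvable (P : PlanningProblem) : Prop :=
  ∃ π, P.PlanFromFor P.init P.goal π

/-- The width of a planning problem: the minimum size `k` of an admissible chain;
it is the number of atoms if `P` is unsolvable, and `0` if `P` is solvable in at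
most one step. -/
noncomputable def width (P : PlanningProblem) : ℕ :=
  if ¬ P.Solvable then P.numAtoms
  else if ∃ π, P.PlanFromFor P.init P.goal π ∧ π.length ≤ 1 then 0
  else sInf {k | ∃ m ts, P.IsAdmissibleChain k m ts}

/-- The problem that is like `P` but with initial state `s` and goal states `G`. -/
def withInitGoal (P : PlanningProblem) (s : P.State) (G : Set P.State) :
    PlanningProblem :=
  { P with init := s, goal := G }

end PlanningProblem

/-! ## Features, sketch rules and policy sketches -/

inductive BoolCond | isTrue | isFalse
  deriving DecidableEq

inductive NumCond | eq0 | gt0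
  deriving DecidableEq

inductive BoolEff | setTrue | setFalse | anyChange
  deriving DecidableEq

inductive NumEff | dec | inc | anyChange
  deriving DecidableEq

/-- A sketch rule `C ↦ E` over Boolean features `B` and numerical features `NV`:
for every feature there is an optional condition and an optional effect
(`none` in the effect means the feature must keep its value). -/
structure SketchRule (B NV : Type) where
  condB : B → Option BoolCond
  condN : NV → Option NumCond
  effB : B → Option BoolEff
  effN : NV → Option NumEff

/-- A valuation of the Boolean and numerical features. -/
structure FVal (B NV : Type) where
  bool : B → Bool
  num : NV → ℕ

/-- The Boolean feature valuation determined by a feature valuation: the truth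
values of the expressions `p` and `n = 0`. -/
def FVal.bval {B NV : Type} (f : FVal B NV) : (B → Bool) × (NV → Bool) :=
  (f.bool, fun v => decide (f.num v = 0))

/-- The condition `C` of the rule holds in the feature valuation `f`. -/
def SketchRule.CondHolds {B NV : Type} (r : SketchRule B NV) (f : FVal B NV) : Prop :=
  (∀ b, (r.condB b = some .isTrue → f.bool b = true) ∧
        (r.condB b = some .isFalse → f.bool b = false)) ∧
  (∀ v, (r.condN v = some .eq0 → f.num v = 0) ∧
        (r.condN v = some .gt0 → 0 < f.num v))

/-- The pair of feature valuations `(f, f')` satisfies the sketch rule `r`. -/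
def SketchRule.Sat {B NV : Type} (r : SketchRule B NV) (f f' : FVal B NV) : Prop :=
  r.CondHolds f ∧
  (∀ b, (r.effB b = some .setTrue → f'.bool b = true) ∧
        (r.effB b = some .setFalse → f'.bool b = false) ∧
        (r.effB b = none → f'.bool b = f.bool b)) ∧
  (∀ v, (r.effN v = some .dec → f'.num v < f.num v) ∧
        (r.effN v = some .inc → f.num v < f'.num v) ∧
        (r.effN v = none → f'.num v = f.num v))

namespace PlanningProblem

/-- The subgoal states `G_r(s)` of sketch rule `r` in state `s`. -/
def Subgoal (P : PlanningProblem) {B NV : Type} (φ : P.State → FVal B NV)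
    (r : SketchRule B NV) (s : P.State) : Set P.State :=
  {s' | r.Sat (φ s) (φ s')}

/-- The `R`-reachable states of `P`: the initial state is `R`-reachable, and if `s`
is `R`-reachable then for each rule `r ∈ R` the states of `G_r(s)` closest to `s`
are `R`-reachable. -/
inductive RReachable (P : PlanningProblem) {B NV : Type} (φ : P.State → FVal B NV)
    (R : Set (SketchRule B NV)) : P.State → Prop
  | init : RReachable P φ R P.init
  | step {s s' : P.State} {r : SketchRule B NV} {π : List P.Action} :
      RReachable P φ R s → r ∈ R → s' ∈ P.Subgoal φ r s → P.Exec s π s' →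
      (∀ s'' ∈ P.Subgoal φ r s, ∀ π', P.Exec s π' s'' → π.length ≤ π'.length) →
      RReachable P φ R s'

/-- `P[s]`: the problem that is like `P` but with initial state `s` and whose goal
states are those of `P` together with the subgoal states `G_r(s)` for `r ∈ R`. -/
def subproblem (P : PlanningProblem) {B NV : Type} (φ : P.State → FVal B NV)
    (R : Set (SketchRule B NV)) (s : P.State) : PlanningProblem :=
  P.withInitGoal s (P.goal ∪ ⋃ r ∈ R, P.Subgoal φ r s)

end PlanningProblem

/-- The features `φ` separate the goals of the class `Q`: there is a set `GB` of
Boolean feature valuations such that a state is a goal state iff its Boolean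
feature valuation belongs to `GB`. -/
def GoalSeparating {ι : Type*} {B NV : Type} (Q : ι → PlanningProblem)
    (φ : ∀ i, (Q i).State → FVal B NV)
    (GB : Set ((B → Bool) × (NV → Bool))) : Prop :=
  ∀ i, ∀ s : (Q i).State, s ∈ (Q i).goal ↔ (φ i s).bval ∈ GB

/-- The sketch `R` is terminating (relative to the goal valuations `GB`): there is
no infinite sequence of non-goal feature valuations in which every consecutive
pair satisfies some rule of `R`. -/
def SketchTerminating {B NV : Type} (R : Set (SketchRule B NV))
    (GB : Set ((B → Bool) × (NV → Bool))) : Prop :=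
  ¬ ∃ f : ℕ → FVal B NV,
      (∀ i, (f i).bval ∉ GB) ∧ ∀ i, ∃ r ∈ R, r.Sat (f i) (f (i + 1))

/-- A sketch is well-formed for the class `Q` if its features separate the goals
of `Q` and it is terminating. -/
def SketchWellFormed {ι : Type*} {B NV : Type} (Q : ι → PlanningProblem)
    (φ : ∀ i, (Q i).State → FVal B NV) (R : Set (SketchRule B NV)) : Prop :=
  ∃ GB, GoalSeparating Q φ GB ∧ SketchTerminating R GB

/-- The sketch width `w_R(Q)` is at most `k`: for every instance of `Q` and every
`R`-reachable state `s`, the width of the subproblem `P[s]` is at most `k`. -/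
def SketchWidthLE {ι : Type*} {B NV : Type} (Q : ι → PlanningProblem)
    (φ : ∀ i, (Q i).State → FVal B NV) (R : Set (SketchRule B NV)) (k : ℕ) : Prop :=
  ∀ i s, PlanningProblem.RReachable (Q i) (φ i) R s →
    ((Q i).subproblem (φ i) R s).width ≤ k

/-! ## The Barman domain (single, initially empty shaker) -/

namespace Barman

/-- A Barman instance: shots, ingredients (one dispenser per ingredient),
cocktails with two-ingredient recipes, a single shaker, two hands, and goal
beverages (ingredients or cocktails) for some of the shots. -/
structure Inst where
  nshots : ℕ
  ningredients : ℕ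
  ncocktails : ℕ
  /-- first recipe ingredient of each cocktail -/
  part1 : Fin ncocktails → Fin ningredients
  /-- second recipe ingredient of each cocktail -/
  part2 : Fin ncocktails → Fin ningredients
  goalBev : Fin nshots → Option (Fin ningredients ⊕ Fin ncocktails)

/-- Beverages are ingredients or cocktails. -/
abbrev Bev (I : Inst) := Fin I.ningredients ⊕ Fin I.ncocktails

inductive Atom (I : Inst)
  | ontableShot (sh : Fin I.nshots)
  | ontableShaker
  | holdingShot (h : Bool) (sh : Fin I.nshots)
  | holdingShaker (h : Bool)
  | handempty (h : Bool)
  | cleanShot (sh : Fin I.nshots)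
  | containsShot (sh : Fin I.nshots) (b : Fin I.ningredients ⊕ Fin I.ncocktails)
  | inShaker (i : Fin I.ningredients)
  | shakerCocktail (c : Fin I.ncocktails)
  | shakerLevel (l : Fin 3)
  deriving DecidableEq, Fintype

inductive Act (I : Inst)
  | graspShot (h : Bool) (sh : Fin I.nshots)
  | graspShaker (h : Bool)
  | putdownShot (h : Bool) (sh : Fin I.nshots)
  | putdownShaker (h : Bool)
  | fillShot (h : Bool) (sh : Fin I.nshots) (i : Fin I.ningredients)
  | cleanShot (h : Bool) (sh : Fin I.nshots)
  | pourShotToShaker (h h' : Bool) (sh : Fin I.nshots) (i : Fin I.ningredients)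
      (l : Fin 3)
  | shake (h : Bool) (c : Fin I.ncocktails)
  | pourShakerToShot (h h' : Bool) (sh : Fin I.nshots) (c : Fin I.ncocktails)

/-- Action preconditions. -/
def pre (I : Inst) (s : Atom I → Bool) : Act I → Prop
  | .graspShot h sh => s (.handempty h) = true ∧ s (.ontableShot sh) = true
  | .graspShaker h => s (.handempty h) = true ∧ s .ontableShaker = true
  | .putdownShot h sh => s (.holdingShot h sh) = true
  | .putdownShaker h => s (.holdingShaker h) = true
  | .fillShot h sh _ => s (.holdingShot h sh) = true ∧ s (.cleanShot sh) = true
  | .cleanShot h sh => s (.holdingShot h sh) = true ∧ s (.cleanShot sh) = false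
  | .pourShotToShaker h h' sh i l =>
      s (.holdingShot h sh) = true ∧ s (.holdingShaker h') = true ∧
      s (.containsShot sh (.inl i)) = true ∧ s (.shakerLevel l) = true ∧ (l : ℕ) < 2
  | .shake h c =>
      s (.holdingShaker h) = true ∧ s (.inShaker (I.part1 c)) = true ∧
      s (.inShaker (I.part2 c)) = true
  | .pourShakerToShot h h' sh c =>
      s (.holdingShaker h) = true ∧ s (.holdingShot h' sh) = true ∧
      s (.cleanShot sh) = true ∧ s (.shakerCocktail c) = true

/-- Action effects. -/
def succ (I : Inst) (s : Atom I → Bool) : Act I → Atom I → Bool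
  | .graspShot h sh => fun a =>
      if a = .holdingShot h sh then true else if a = .handempty h then false
      else if a = .ontableShot sh then false else s a
  | .graspShaker h => fun a =>
      if a = .holdingShaker h then true else if a = .handempty h then false
      else if a = .ontableShaker then false else s a
  | .putdownShot h sh => fun a =>
      if a = .ontableShot sh then true else if a = .handempty h then true
      else if a = .holdingShot h sh then false else s a
  | .putdownShaker h => fun a =>
      if a = .ontableShaker then true else if a = .handempty h then true
      else if a = .holdingShaker h then false else s a
  | .fillShot _ sh i => fun a =>
      if a = .containsShot sh (.inl i) then true
      else if a = .cleanShot sh then false else s a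
  | .cleanShot _ sh => fun a =>
      match a with
      | .cleanShot sh' => if sh' = sh then true else s (.cleanShot sh')
      | .containsShot sh' b => if sh' = sh then false else s (.containsShot sh' b)
      | x => s x
  | .pourShotToShaker _ _ sh i l => fun a =>
      if a = .inShaker i then true
      else if a = .containsShot sh (.inl i) then false
      else if a = .shakerLevel (l + 1) then true
      else if a = .shakerLevel l then false else s a
  | .shake _ c => fun a =>
      match a with
      | .shakerCocktail c' => if c' = c then true else s (.shakerCocktail c')
      | .inShaker _ => false
      | x => s x
  | .pourShakerToShot _ _ sh c => fun a =>
      match a with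
      | .containsShot sh' b =>
          if sh' = sh then (if b = .inr c then true else s (.containsShot sh' b))
          else s (.containsShot sh' b)
      | .cleanShot sh' => if sh' = sh then false else s (.cleanShot sh')
      | .shakerCocktail c' => if c' = c then false else s (.shakerCocktail c')
      | .shakerLevel l => decide (l = 0)
      | x => s x

/-- Initially the shaker is empty and everything is clean and on the table. -/
def init (I : Inst) : Atom I → Bool
  | .ontableShot _ => true
  | .ontableShaker => true
  | .holdingShot _ _ => false
  | .holdingShaker _ => false
  | .handempty _ => true
  | .cleanShot _ => true
  | .containsShot _ _ => false
  | .inShaker _ => false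
  | .shakerCocktail _ => false
  | .shakerLevel l => decide (l = 0)

/-- The induced classical planning problem. -/
def toProblem (I : Inst) : PlanningProblem where
  Atom := Atom I
  fintypeAtom := inferInstance
  Action := Act I
  init := init I
  goal := {s | ∀ sh b, I.goalBev sh = some b → s (.containsShot sh b) = true}
  applicable := fun s => {a | pre I s a}
  succ := succ I

/-- Cocktail `c` is needed for some shot that is not yet served. -/
def unservedCocktail (I : Inst) (s : Atom I → Bool) (c : Fin I.ncocktails) : Prop :=
  ∃ sh, I.goalBev sh = some (.inr c) ∧ s (.containsShot sh (.inr c)) = false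

/-- The Boolean features `c1` and `c2`. -/
inductive BF | c1 | c2
  deriving DecidableEq

instance : Fintype BF := Fintype.ofList [.c1, .c2] (by intro x; cases x <;> simp)

/-- The numerical features `g` and `u`. -/
inductive NF | g | u
  deriving DecidableEq

instance : Fintype NF := Fintype.ofList [.g, .u] (by intro x; cases x <;> simp)

/-- `g`: number of unserved beverages; `u`: number of shots containing a
beverage different from the one the goal specifies for them; `c1`: the first
recipe ingredient of an unserved cocktail is in the shaker; `c2`: both recipe
ingredients of an unserved cocktail are in the shaker. -/
noncomputable def feat (I : Inst) (s : (toProblem I).State) : FVal BF NF where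
  bool := fun b =>
    match b with
    | .c1 => if ∃ c, unservedCocktail I s c ∧ s (.inShaker (I.part1 c)) = true
             then true else false
    | .c2 => if ∃ c, unservedCocktail I s c ∧ s (.inShaker (I.part1 c)) = true ∧
                s (.inShaker (I.part2 c)) = true
             then true else false
  num := fun v =>
    match v with
    | .g => Set.ncard {sh : Fin I.nshots |
        ∃ b, I.goalBev sh = some b ∧ s (.containsShot sh b) = false}
    | .u => Set.ncard {sh : Fin I.nshots |
        ∃ b, s (.containsShot sh b) = true ∧ I.goalBev sh ≠ some b}

/-- `r1 = {¬c1} ↦ {u?, c1}`. -/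
def r1 : SketchRule BF NF where
  condB := fun b => match b with | .c1 => some .isFalse | .c2 => none
  condN := fun _ => none
  effB := fun b => match b with | .c1 => some .setTrue | .c2 => none
  effN := fun v => match v with | .g => none | .u => some .anyChange

/-- `r2 = {c1, ¬c2} ↦ {u?, c2}`. -/
def r2 : SketchRule BF NF where
  condB := fun b => match b with | .c1 => some .isTrue | .c2 => some .isFalse
  condN := fun _ => none
  effB := fun b => match b with | .c1 => none | .c2 => some .setTrue
  effN := fun v => match v with | .g => none | .u => some .anyChange

/-- `r3 = {u>0} ↦ {u↓}`. -/
def r3 : SketchRule BF NF where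
  condB := fun _ => none
  condN := fun v => match v with | .g => none | .u => some .gt0
  effB := fun _ => none
  effN := fun v => match v with | .g => none | .u => some .dec

/-- `r4 = {g>0} ↦ {g↓, c1?, c2?}`. -/
def r4 : SketchRule BF NF where
  condB := fun _ => none
  condN := fun v => match v with | .g => some .gt0 | .u => none
  effB := fun _ => some .anyChange
  effN := fun v => match v with | .g => some .dec | .u => none

def sketch : Set (SketchRule BF NF) := {r1, r2, r3, r4}

end Barman

namespace PlanningProblem


theorem exec_append {P : PlanningProblem} {s s' s'' : P.State} {π π' : List P.Action}
    (h : P.Exec s π s') (h' : P.Exec s' π' s'') : P.Exec s (π ++ π') s'' := by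
  induction h with
  | nil => exact h'
  | cons ha _ ih => exact .cons ha (ih h')

theorem exec_nil_iff {P : PlanningProblem} {s s' : P.State} :
    P.Exec s [] s' ↔ s' = s := by
  constructor
  · intro h; cases h; rfl
  · rintro rfl; exact .nil _

theorem exec_cons_iff {P : PlanningProblem} {s s' : P.State} {a : P.Action}
    {π : List P.Action} :
    P.Exec s (a :: π) s' ↔ a ∈ P.applicable s ∧ P.Exec (P.succ s a) π s' := by
  constructor
  · intro h; cases h with | cons ha h' => exact ⟨ha, h'⟩
  · rintro ⟨ha, h⟩; exact .cons ha h

theorem reachable_of_RReachable {P : PlanningProblem} {B NV : Type}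
    {φ : P.State → FVal B NV} {R : Set (SketchRule B NV)} {s : P.State}
    (h : P.RReachable φ R s) : ∃ π, P.Exec P.init π s := by
  induction h with
  | init => exact ⟨[], .nil _⟩
  | step _ _ _ hexec _ ih =>
      obtain ⟨π0, h0⟩ := ih
      exact ⟨π0 ++ _, exec_append h0 hexec⟩

theorem exec_withInitGoal {P : PlanningProblem} {s0 : P.State} {G : Set P.State}
    {π : List P.Action} : ∀ {s s' : P.State},
    (P.withInitGoal s0 G).Exec s π s' ↔ P.Exec s π s' := by
  induction π with
  | nil =>
      intro s s'
      exact (exec_nil_iff (P := P.withInitGoal s0 G)).trans exec_nil_iff.symm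
  | cons a π ih =>
      intro s s'
      exact ((exec_cons_iff (P := P.withInitGoal s0 G)).trans (and_congr Iff.rfl ih)).trans
        (exec_cons_iff (P := P)).symm

end PlanningProblem
namespace Barman

variable {I : Inst}

/-- Invariants of reachable Barman states. -/
def Inv (I : Inst) (s : Atom I → Bool) : Prop :=
  (∀ sh b, s (.containsShot sh b) = true → s (.cleanShot sh) = false) ∧
  (∀ sh b b', s (.containsShot sh b) = true → s (.containsShot sh b') = true → b = b') ∧
  (∀ sh, (∀ h, s (.holdingShot h sh) = false) → s (.ontableShot sh) = true) ∧
  (∀ h, s (.handempty h) = false →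
      (∃ sh, s (.holdingShot h sh) = true) ∨ s (.holdingShaker h) = true)

theorem inv_init : Inv I (init I) := by
  refine ⟨?_, ?_, ?_, ?_⟩ <;> intros <;> simp_all [init]

theorem inv12_of {s s' : Atom I → Bool}
    (hc : ∀ sh b, s' (.containsShot sh b) = s (.containsShot sh b))
    (hcl : ∀ sh, s' (.cleanShot sh) = s (.cleanShot sh))
    (h1 : ∀ sh b, s (.containsShot sh b) = true → s (.cleanShot sh) = false)
    (h2 : ∀ sh b b', s (.containsShot sh b) = true → s (.containsShot sh b') = true → b = b') :
    (∀ sh b, s' (.containsShot sh b) = true → s' (.cleanShot sh) = false) ∧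
    (∀ sh b b', s' (.containsShot sh b) = true → s' (.containsShot sh b') = true → b = b') := by
  constructor
  · intro sh b hb; rw [hc] at hb; rw [hcl]; exact h1 sh b hb
  · intro sh b b' hb hb'; rw [hc] at hb hb'; exact h2 sh b b' hb hb'

theorem inv34_of {s s' : Atom I → Bool}
    (hh : ∀ h sh, s' (.holdingShot h sh) = s (.holdingShot h sh))
    (ho : ∀ sh, s' (.ontableShot sh) = s (.ontableShot sh))
    (he : ∀ h, s' (.handempty h) = s (.handempty h))
    (hk : ∀ h, s' (.holdingShaker h) = s (.holdingShaker h))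
    (h3 : ∀ sh, (∀ h, s (.holdingShot h sh) = false) → s (.ontableShot sh) = true)
    (h4 : ∀ h, s (.handempty h) = false →
      (∃ sh, s (.holdingShot h sh) = true) ∨ s (.holdingShaker h) = true) :
    (∀ sh, (∀ h, s' (.holdingShot h sh) = false) → s' (.ontableShot sh) = true) ∧
    (∀ h, s' (.handempty h) = false →
      (∃ sh, s' (.holdingShot h sh) = true) ∨ s' (.holdingShaker h) = true) := by
  constructor
  · intro sh hf; rw [ho]; exact h3 sh fun h => (hh h sh).symm.trans (hf h)
  · intro h hf; rw [he] at hf; rw [hk]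
    rcases h4 h hf with ⟨sh, hs⟩ | hs
    · exact Or.inl ⟨sh, (hh h sh).trans hs⟩
    · exact Or.inr hs

theorem inv_succ {s : Atom I → Bool} {a : Act I} (ha : pre I s a) (hI : Inv I s) :
    Inv I (succ I s a) := by
  obtain ⟨h1, h2, h3, h4⟩ := hI
  cases a with
  | graspShot h sh =>
      obtain ⟨hi12a, hi12b⟩ := inv12_of (s' := succ I s (.graspShot h sh))
        (by intro sh' b'; simp [succ]) (by intro sh'; simp [succ]) h1 h2
      refine ⟨hi12a, hi12b, ?_, ?_⟩
      · intro sh' hh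
        by_cases e : sh' = sh
        · subst e; have := hh h; simp [succ] at this
        · have : ∀ h', s (.holdingShot h' sh') = false := by
            intro h'; have := hh h'; simpa [succ, e] using this
          have := h3 sh' this; simpa [succ, e] using this
      · intro h' hh
        by_cases e : h' = h
        · subst e; left; exact ⟨sh, by simp [succ]⟩
        · simp [succ, e] at hh ⊢
          rcases h4 h' hh with ⟨sh', hs⟩ | hs
          · left; exact ⟨sh', by simpa [succ] using hs⟩
          · right; exact hs
  | graspShaker h =>
      obtain ⟨hi12a, hi12b⟩ := inv12_of (s' := succ I s (.graspShaker h))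
        (by intro sh' b'; simp [succ]) (by intro sh'; simp [succ]) h1 h2
      refine ⟨hi12a, hi12b, ?_, ?_⟩
      · intro sh' hh
        have : ∀ h', s (.holdingShot h' sh') = false := by
          intro h'; have := hh h'; simpa [succ] using this
        have := h3 sh' this; simpa [succ] using this
      · intro h' hh
        by_cases e : h' = h
        · subst e; right; simp [succ]
        · simp [succ, e] at hh ⊢
          rcases h4 h' hh with ⟨sh', hs⟩ | hs
          · left; exact ⟨sh', by simpa [succ] using hs⟩
          · right; simpa [succ, e] using hs
  | putdownShot h sh =>
      obtain ⟨hi12a, hi12b⟩ := inv12_of (s' := succ I s (.putdownShot h sh))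
        (by intro sh' b'; simp [succ]) (by intro sh'; simp [succ]) h1 h2
      refine ⟨hi12a, hi12b, ?_, ?_⟩
      · intro sh' hh
        by_cases e : sh' = sh
        · subst e; simp [succ]
        · have : ∀ h', s (.holdingShot h' sh') = false := by
            intro h'
            have := hh h'
            by_cases e2 : h' = h <;> simpa [succ, e, e2] using this
          have := h3 sh' this; simpa [succ, e] using this
      · intro h' hh
        by_cases e : h' = h
        · subst e; simp [succ] at hh
        · simp [succ, e] at hh ⊢
          rcases h4 h' hh with ⟨sh', hs⟩ | hs
          · left; exact ⟨sh', by simpa [succ, e] using hs⟩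
          · right; exact hs
  | putdownShaker h =>
      obtain ⟨hi12a, hi12b⟩ := inv12_of (s' := succ I s (.putdownShaker h))
        (by intro sh' b'; simp [succ]) (by intro sh'; simp [succ]) h1 h2
      refine ⟨hi12a, hi12b, ?_, ?_⟩
      · intro sh' hh
        have : ∀ h', s (.holdingShot h' sh') = false := by
          intro h'; have := hh h'; simpa [succ] using this
        have := h3 sh' this; simpa [succ] using this
      · intro h' hh
        by_cases e : h' = h
        · subst e; simp [succ] at hh
        · simp [succ, e] at hh ⊢
          rcases h4 h' hh with ⟨sh', hs⟩ | hs
          · left; exact ⟨sh', by simpa [succ] using hs⟩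
          · right; simpa [succ, e] using hs
  | fillShot h sh i =>
      obtain ⟨hp1, hp2⟩ := ha
      obtain ⟨hi34a, hi34b⟩ := inv34_of (s' := succ I s (.fillShot h sh i))
        (by intro h' sh'; simp [succ]) (by intro sh'; simp [succ])
        (by intro h'; simp [succ]) (by intro h'; simp [succ]) h3 h4
      refine ⟨?_, ?_, hi34a, hi34b⟩
      · intro sh' b' hb
        by_cases e : sh' = sh
        · subst e; simp [succ]
        · simp [succ, e] at hb ⊢
          · exact h1 sh' b' (by simpa using hb)
      · intro sh' b b' hb hb'
        by_cases e : sh' = sh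
        · have hempty : ∀ b0, s (.containsShot sh b0) = false := by
            intro b0
            cases hx : s (.containsShot sh b0) with
            | false => rfl
            | true => have := h1 sh b0 hx; rw [hp2] at this; simp at this
          by_cases eb : b = Sum.inl i
          · by_cases eb' : b' = Sum.inl i
            · rw [eb, eb']
            · exfalso
              simp [succ, e, eb'] at hb'
              rw [hempty b'] at hb'; simp at hb'
          · exfalso
            simp [succ, e, eb] at hb
            rw [hempty b] at hb; simp at hb
        · simp [succ, e] at hb hb'
          exact h2 sh' b b' hb hb'
  | cleanShot h sh =>
      obtain ⟨hi34a, hi34b⟩ := inv34_of (s' := succ I s (.cleanShot h sh))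
        (by intro h' sh'; simp [succ]) (by intro sh'; simp [succ])
        (by intro h'; simp [succ]) (by intro h'; simp [succ]) h3 h4
      refine ⟨?_, ?_, hi34a, hi34b⟩
      · intro sh' b' hb
        by_cases e : sh' = sh
        · subst e; simp [succ] at hb
        · simp [succ, e] at hb ⊢; exact h1 sh' b' hb
      · intro sh' b b' hb hb'
        by_cases e : sh' = sh
        · subst e; simp [succ] at hb
        · simp [succ, e] at hb hb'; exact h2 sh' b b' hb hb'
  | pourShotToShaker h h' sh i l =>
      obtain ⟨hi34a, hi34b⟩ := inv34_of (s' := succ I s (.pourShotToShaker h h' sh i l))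
        (by intro h2 sh'; simp [succ]) (by intro sh'; simp [succ])
        (by intro h2; simp [succ]) (by intro h2; simp [succ]) h3 h4
      have key : ∀ sh' b', succ I s (.pourShotToShaker h h' sh i l)
          (.containsShot sh' b') = true → s (.containsShot sh' b') = true := by
        intro sh' b' hb
        by_cases e1 : sh' = sh
        · by_cases e2 : b' = Sum.inl i
          · simp [succ, e1, e2] at hb
          · simpa [succ, e1, e2] using hb
        · simpa [succ, e1] using hb
      refine ⟨?_, ?_, hi34a, hi34b⟩
      · intro sh' b' hb
        have := h1 sh' b' (key sh' b' hb); simpa [succ] using this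
      · intro sh' b b' hb hb'
        exact h2 sh' b b' (key sh' b hb) (key sh' b' hb')
  | shake h c =>
      obtain ⟨hi12a, hi12b⟩ := inv12_of (s' := succ I s (.shake h c))
        (by intro sh' b'; simp [succ]) (by intro sh'; simp [succ]) h1 h2
      obtain ⟨hi34a, hi34b⟩ := inv34_of (s' := succ I s (.shake h c))
        (by intro h2 sh'; simp [succ]) (by intro sh'; simp [succ])
        (by intro h2; simp [succ]) (by intro h2; simp [succ]) h3 h4
      exact ⟨hi12a, hi12b, hi34a, hi34b⟩
  | pourShakerToShot h h' sh c =>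
      obtain ⟨hp1, hp2, hp3, hp4⟩ := ha
      obtain ⟨hi34a, hi34b⟩ := inv34_of (s' := succ I s (.pourShakerToShot h h' sh c))
        (by intro h2 sh'; simp [succ]) (by intro sh'; simp [succ])
        (by intro h2; simp [succ]) (by intro h2; simp [succ]) h3 h4
      refine ⟨?_, ?_, hi34a, hi34b⟩
      · intro sh' b' hb
        by_cases e : sh' = sh
        · subst e; simp [succ]
        · simp [succ, e] at hb ⊢; exact h1 sh' b' hb
      · intro sh' b b' hb hb'
        by_cases e : sh' = sh
        · have hempty : ∀ b0, s (.containsShot sh b0) = false := by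
            intro b0
            cases hx : s (.containsShot sh b0) with
            | false => rfl
            | true => have := h1 sh b0 hx; rw [hp3] at this; simp at this
          by_cases eb : b = Sum.inr c
          · by_cases eb' : b' = Sum.inr c
            · rw [eb, eb']
            · exfalso
              simp [succ, e, eb'] at hb'
              rw [hempty b'] at hb'; simp at hb'
          · exfalso
            simp [succ, e, eb] at hb
            rw [hempty b] at hb; simp at hb
        · simp [succ, e] at hb hb'
          exact h2 sh' b b' hb hb'

end Barman
namespace Barman

variable {I : Inst}

theorem inv_exec {s s' : (toProblem I).State} {π : List (Act I)}
    (h : (toProblem I).Exec s π s') (hI : Inv I s) : Inv I s' := by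
  induction h with
  | nil => exact hI
  | cons ha _ ih => exact ih (inv_succ ha hI)

theorem inv_reachable {s : (toProblem I).State}
    (h : PlanningProblem.RReachable (toProblem I) (feat I) sketch s) : Inv I s := by
  obtain ⟨π, hπ⟩ := PlanningProblem.reachable_of_RReachable h
  exact inv_exec hπ inv_init

/-! one-step "setter" lemmas -/

theorem holding_setter {s : Atom I → Bool} {a : Act I} {h : Bool} {sh : Fin I.nshots}
    (h0 : s (.holdingShot h sh) = false)
    (h1 : succ I s a (.holdingShot h sh) = true) : a = .graspShot h sh := by
  cases a with
  | graspShot h' sh' =>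
      by_cases e : h = h' ∧ sh = sh'
      · rw [e.1, e.2]
      · rw [Decidable.not_and_iff_or_not] at e
        rcases e with e | e
        · simp [succ, h0] at h1; exact absurd h1.1 e
        · simp [succ, h0] at h1; exact absurd h1.2 e
  | putdownShot h' sh' =>
      by_cases e : h = h' ∧ sh = sh'
      · simp [succ, e.1, e.2] at h1
      · rw [Decidable.not_and_iff_or_not] at e
        rcases e with e | e <;> simp [succ, Ne.symm e, h0] at h1
  | _ => simp_all [succ]

theorem clean_setter {s : Atom I → Bool} {a : Act I} {sh : Fin I.nshots}
    (h0 : s (.cleanShot sh) = false)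
    (h1 : succ I s a (.cleanShot sh) = true) : ∃ h, a = .cleanShot h sh := by
  cases a with
  | cleanShot h' sh' =>
      by_cases e : sh = sh'
      · exact ⟨h', by rw [e]⟩
      · simp [succ, h0] at h1; exact absurd h1 e
  | fillShot h' sh' i =>
      by_cases e : sh = sh' <;> simp [succ, e, h0] at h1
  | pourShakerToShot h' h'' sh' c =>
      by_cases e : sh = sh' <;> simp [succ, e, Ne.symm, h0] at h1
  | _ => simp_all [succ]

theorem handempty_setter {s : Atom I → Bool} {a : Act I} {h : Bool}
    (h0 : s (.handempty h) = false)
    (h1 : succ I s a (.handempty h) = true) :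
    (∃ sh, a = .putdownShot h sh) ∨ a = .putdownShaker h := by
  cases a with
  | putdownShot h' sh' =>
      by_cases e : h = h'
      · exact Or.inl ⟨sh', by rw [e]⟩
      · simp [succ, h0] at h1; exact absurd h1 e
  | putdownShaker h' =>
      by_cases e : h = h'
      · exact Or.inr (by rw [e])
      · simp [succ, h0] at h1; exact absurd h1 e
  | graspShot h' sh' =>
      by_cases e : h = h' <;> simp [succ, e, h0] at h1
  | graspShaker h' =>
      by_cases e : h = h' <;> simp [succ, e, h0] at h1
  | _ => simp_all [succ]

/-- An action that removes a (contained) beverage from a shot must be holding the shot. -/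
theorem contains_remover {s : Atom I → Bool} {a : Act I} {sh : Fin I.nshots}
    {b : Fin I.ningredients ⊕ Fin I.ncocktails}
    (hpre : pre I s a)
    (h0 : s (.containsShot sh b) = true)
    (h1 : succ I s a (.containsShot sh b) = false) :
    ∃ h, s (.holdingShot h sh) = true := by
  cases a with
  | cleanShot h' sh' =>
      by_cases e : sh = sh'
      · exact ⟨h', by rw [e]; exact hpre.1⟩
      · simp [succ, e, h0] at h1
  | pourShotToShaker h' h'' sh' i l =>
      by_cases e : sh = sh'
      · exact ⟨h', by rw [e]; exact hpre.1⟩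
      · simp [succ, e, h0] at h1
  | fillShot h' sh' i =>
      by_cases e : sh = sh' ∧ b = Sum.inl i
      · simp [succ, e.1, e.2] at h1
      · rw [Decidable.not_and_iff_or_not] at e
        rcases e with e | e <;> simp [succ, e, h0] at h1
  | pourShakerToShot h' h'' sh' c =>
      by_cases e : sh = sh'
      · by_cases e2 : b = Sum.inr c
        · simp [succ, e, e2, h0] at h1
        · simp [succ, e, e2, h0] at h1
          rw [e] at h0; rw [h0] at h1; simp at h1
      · simp [succ, e, h0] at h1
  | _ => simp_all [succ]

end Barman
namespace Barman

variable {I : Inst}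

theorem feat_u (s : (toProblem I).State) :
    (feat I s).num NF.u = Set.ncard {sh : Fin I.nshots |
      ∃ b, s (.containsShot sh b) = true ∧ I.goalBev sh ≠ some b} := rfl

theorem feat_g (s : (toProblem I).State) :
    (feat I s).num NF.g = Set.ncard {sh : Fin I.nshots |
      ∃ b, I.goalBev sh = some b ∧ s (.containsShot sh b) = false} := rfl

theorem feat_c1_congr {s s' : (toProblem I).State}
    (h : (∃ c, unservedCocktail I s' c ∧ s' (.inShaker (I.part1 c)) = true) ↔
         (∃ c, unservedCocktail I s c ∧ s (.inShaker (I.part1 c)) = true)) :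
    (feat I s').bool BF.c1 = (feat I s).bool BF.c1 := by
  simp only [feat]
  exact if_congr h rfl rfl

theorem feat_c2_congr {s s' : (toProblem I).State}
    (h : (∃ c, unservedCocktail I s' c ∧ s' (.inShaker (I.part1 c)) = true ∧
            s' (.inShaker (I.part2 c)) = true) ↔
         (∃ c, unservedCocktail I s c ∧ s (.inShaker (I.part1 c)) = true ∧
            s (.inShaker (I.part2 c)) = true)) :
    (feat I s').bool BF.c2 = (feat I s).bool BF.c2 := by
  simp only [feat]
  exact if_congr h rfl rfl

/-- The effect of cleaning a shot `sh` that contains a wrong beverage, in a state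
`s₁` whose contents and shaker contents agree with `s`. -/
theorem clean_effect {s : (toProblem I).State} (hInv : Inv I s)
    {sh : Fin I.nshots} {b : Fin I.ningredients ⊕ Fin I.ncocktails}
    (hb : s (.containsShot sh b) = true) (hwrong : I.goalBev sh ≠ some b)
    {s₁ : (toProblem I).State} (h : Bool)
    (hcont : ∀ sh' b', s₁ (.containsShot sh' b') = s (.containsShot sh' b'))
    (hshk : ∀ i, s₁ (.inShaker i) = s (.inShaker i)) :
    (feat I (succ I s₁ (.cleanShot h sh))).num NF.u < (feat I s).num NF.u ∧
    (feat I (succ I s₁ (.cleanShot h sh))).num NF.g = (feat I s).num NF.g ∧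
    (feat I (succ I s₁ (.cleanShot h sh))).bool BF.c1 = (feat I s).bool BF.c1 ∧
    (feat I (succ I s₁ (.cleanShot h sh))).bool BF.c2 = (feat I s).bool BF.c2 := by
  obtain ⟨h1, h2, h3, h4⟩ := hInv
  set s₂ := succ I s₁ (.cleanShot h sh) with hs₂
  have key : ∀ sh' b', s₂ (.containsShot sh' b') =
      if sh' = sh then false else s (.containsShot sh' b') := by
    intro sh' b'
    by_cases e : sh' = sh <;> simp [hs₂, succ, e, hcont]
  have keyShk : ∀ i, s₂ (.inShaker i) = s (.inShaker i) := by
    intro i; simp [hs₂, succ, hshk]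
  -- the goal beverage of `sh` is not in `sh` (in `s` nor in `s₂`)
  have hgoalfree : ∀ b', I.goalBev sh = some b' → s (.containsShot sh b') = false := by
    intro b' hgb
    cases hx : s (.containsShot sh b') with
    | false => rfl
    | true =>
        have := h2 sh b' b hx hb
        rw [this] at hgb
        exact absurd hgb hwrong
  refine ⟨?_, ?_, ?_, ?_⟩
  · -- u decreases
    rw [feat_u s₂, feat_u s]
    have hsub : {sh' : Fin I.nshots | ∃ b', s₂ (.containsShot sh' b') = true ∧
        I.goalBev sh' ≠ some b'} ⊆ {sh' : Fin I.nshots |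
        ∃ b', s (.containsShot sh' b') = true ∧ I.goalBev sh' ≠ some b'} := by
      rintro x ⟨b', hx, hg⟩
      rw [key] at hx
      by_cases e : x = sh
      · rw [if_pos e] at hx; exact absurd hx (by simp)
      · rw [if_neg e] at hx; exact ⟨b', hx, hg⟩
    have hmem : sh ∈ {sh' : Fin I.nshots |
        ∃ b', s (.containsShot sh' b') = true ∧ I.goalBev sh' ≠ some b'} := ⟨b, hb, hwrong⟩
    have hnot : sh ∉ {sh' : Fin I.nshots | ∃ b', s₂ (.containsShot sh' b') = true ∧
        I.goalBev sh' ≠ some b'} := by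
      rintro ⟨b', hx, hg⟩
      rw [key, if_pos rfl] at hx
      exact absurd hx (by simp)
    exact Set.ncard_lt_ncard ((Set.ssubset_iff_of_subset hsub).mpr ⟨sh, hmem, hnot⟩)
      (Set.toFinite _)
  · -- g unchanged
    rw [feat_g s₂, feat_g s]
    congr 1
    ext x
    simp only [Set.mem_setOf_eq]
    constructor
    · rintro ⟨b', hgb, hx⟩
      by_cases e : x = sh
      · exact ⟨b', hgb, by rw [e]; exact hgoalfree b' (e ▸ hgb)⟩
      · refine ⟨b', hgb, ?_⟩; rw [key, if_neg e] at hx; exact hx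
    · rintro ⟨b', hgb, hx⟩
      refine ⟨b', hgb, ?_⟩
      rw [key]
      by_cases e : x = sh
      · rw [if_pos e]
      · rw [if_neg e]; exact hx
  · -- c1 unchanged
    apply feat_c1_congr
    have huns : ∀ c, unservedCocktail I s₂ c ↔ unservedCocktail I s c := by
      intro c
      constructor
      · rintro ⟨x, hgb, hx⟩
        refine ⟨x, hgb, ?_⟩
        by_cases e : x = sh
        · rw [e]; exact hgoalfree _ (e ▸ hgb)
        · rw [key, if_neg e] at hx; exact hx
      · rintro ⟨x, hgb, hx⟩
        refine ⟨x, hgb, ?_⟩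
        rw [key]
        by_cases e : x = sh
        · rw [if_pos e]
        · rw [if_neg e]; exact hx
    constructor
    · rintro ⟨c, hc, hi⟩; exact ⟨c, (huns c).mp hc, (keyShk _) ▸ hi⟩
    · rintro ⟨c, hc, hi⟩; exact ⟨c, (huns c).mpr hc, (keyShk _).trans hi⟩
  · -- c2 unchanged
    apply feat_c2_congr
    have huns : ∀ c, unservedCocktail I s₂ c ↔ unservedCocktail I s c := by
      intro c
      constructor
      · rintro ⟨x, hgb, hx⟩
        refine ⟨x, hgb, ?_⟩
        by_cases e : x = sh
        · rw [e]; exact hgoalfree _ (e ▸ hgb)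
        · rw [key, if_neg e] at hx; exact hx
      · rintro ⟨x, hgb, hx⟩
        refine ⟨x, hgb, ?_⟩
        rw [key]
        by_cases e : x = sh
        · rw [if_pos e]
        · rw [if_neg e]; exact hx
    constructor
    · rintro ⟨c, hc, hi1, hi2⟩
      exact ⟨c, (huns c).mp hc, (keyShk _) ▸ hi1, (keyShk _) ▸ hi2⟩
    · rintro ⟨c, hc, hi1, hi2⟩
      exact ⟨c, (huns c).mpr hc, (keyShk _).trans hi1, (keyShk _).trans hi2⟩

end Barman
namespace PlanningProblem

theorem len_ge_one {P : PlanningProblem} {s : P.State} {T : Set P.State}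
    {π : List P.Action} (h : P.PlanFromFor s T π) (h0 : s ∉ T) : 1 ≤ π.length := by
  obtain ⟨s', he, hmem⟩ := h
  cases π with
  | nil => rw [exec_nil_iff] at he; exact absurd (he ▸ hmem) h0
  | cons a l => simp

theorem len_ge_two {P : PlanningProblem} {s : P.State} {T : Set P.State}
    {π : List P.Action} (h : P.PlanFromFor s T π) (h0 : s ∉ T)
    (h1 : ∀ a, a ∈ P.applicable s → P.succ s a ∉ T) : 2 ≤ π.length := by
  obtain ⟨s', he, hmem⟩ := h
  match π with
  | [] => rw [exec_nil_iff] at he; exact absurd (he ▸ hmem) h0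
  | [a] =>
      rw [exec_cons_iff] at he
      obtain ⟨ha, he⟩ := he
      rw [exec_nil_iff] at he
      exact absurd (he ▸ hmem) (h1 a ha)
  | a :: b :: l => simp

theorem len_ge_three {P : PlanningProblem} {s : P.State} {T : Set P.State}
    {π : List P.Action} (h : P.PlanFromFor s T π) (h0 : s ∉ T)
    (h1 : ∀ a, a ∈ P.applicable s → P.succ s a ∉ T)
    (h2 : ∀ a, a ∈ P.applicable s → ∀ b, b ∈ P.applicable (P.succ s a) →
        P.succ (P.succ s a) b ∉ T) : 3 ≤ π.length := by
  obtain ⟨s', he, hmem⟩ := h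
  match π with
  | [] => rw [exec_nil_iff] at he; exact absurd (he ▸ hmem) h0
  | [a] =>
      rw [exec_cons_iff] at he
      obtain ⟨ha, he⟩ := he
      rw [exec_nil_iff] at he
      exact absurd (he ▸ hmem) (h1 a ha)
  | [a, b] =>
      rw [exec_cons_iff] at he
      obtain ⟨ha, he⟩ := he
      rw [exec_cons_iff] at he
      obtain ⟨hb, he⟩ := he
      rw [exec_nil_iff] at he
      exact absurd (he ▸ hmem) (h2 a ha b hb)
  | a :: b :: c :: l => simp

theorem opt_len_le {P : PlanningProblem} {s : P.State} {T : Set P.State}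
    {π ρ : List P.Action} (h : P.OptimalFromFor s T π) (hρ : P.PlanFromFor s T ρ) :
    π.length ≤ ρ.length := h.2 ρ hρ

end PlanningProblem

theorem exists_mem_not_mem_of_ncard_lt {α : Type*} [Finite α] {A B : Set α}
    (h : Set.ncard A < Set.ncard B) : ∃ x ∈ B, x ∉ A := by
  by_contra hc
  push_neg at hc
  exact absurd (Set.ncard_le_ncard hc (Set.toFinite A)) (by omega)
namespace PlanningProblem

theorem mem_tuple_singleton {P : PlanningProblem} {x : P.Atom} {σ : P.State} :
    σ ∈ P.TupleStates {x} ↔ σ x = true := by simp [TupleStates]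

theorem mem_tuple_empty {P : PlanningProblem} {σ : P.State} :
    σ ∈ P.TupleStates ∅ := by simp [TupleStates]

end PlanningProblem

namespace Barman

variable {I : Inst}

/-- With no wrong shot held and no empty hand, `u` cannot decrease in two steps. -/
theorem no_u_decrease_two {s : (toProblem I).State}
    (hunheld : ∀ h₀ sh₀ b₀, s (.containsShot sh₀ b₀) = true →
      I.goalBev sh₀ ≠ some b₀ → s (.holdingShot h₀ sh₀) = false)
    (hfull : ∀ h₀, s (.handempty h₀) = false)
    {a1 a2 : Act I} (ha1 : pre I s a1) (ha2 : pre I (succ I s a1) a2) :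
    ¬ (feat I (succ I (succ I s a1) a2)).num NF.u < (feat I s).num NF.u := by
  intro hlt
  rw [feat_u (succ I (succ I s a1) a2), feat_u s] at hlt
  obtain ⟨x, hxB, hxA⟩ := exists_mem_not_mem_of_ncard_lt hlt
  obtain ⟨b₀, hb₀, hw₀⟩ := hxB
  simp only [Set.mem_setOf_eq, not_exists] at hxA
  have hflip : succ I (succ I s a1) a2 (.containsShot x b₀) = false := by
    cases hv : succ I (succ I s a1) a2 (.containsShot x b₀) with
    | false => rfl
    | true => exact absurd (And.intro hv hw₀) (by simpa using hxA b₀)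
  cases hy : succ I s a1 (.containsShot x b₀) with
  | false =>
      obtain ⟨h', hh'⟩ := contains_remover ha1 hb₀ hy
      exact absurd hh' (by rw [hunheld h' x b₀ hb₀ hw₀]; simp)
  | true =>
      obtain ⟨h', hh'⟩ := contains_remover ha2 hy hflip
      have hs : s (.holdingShot h' x) = false := hunheld h' x b₀ hb₀ hw₀
      have := holding_setter hs hh'
      subst this
      exact absurd ha1.1 (by rw [hfull h']; simp)



namespace ChainDefs

def tsB (I : Inst) (h₀ : Bool) (sh : Fin I.nshots) : ℕ → Finset (Atom I)
  | 0 => ∅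
  | 1 => {Atom.holdingShot h₀ sh}
  | _ + 2 => {Atom.cleanShot sh}

theorem tsB_zero (I : Inst) (h₀ : Bool) (sh : Fin I.nshots) : tsB I h₀ sh 0 = ∅ := rfl
theorem tsB_one (I : Inst) (h₀ : Bool) (sh : Fin I.nshots) :
    tsB I h₀ sh 1 = {Atom.holdingShot h₀ sh} := rfl
theorem tsB_two (I : Inst) (h₀ : Bool) (sh : Fin I.nshots) :
    tsB I h₀ sh 2 = {Atom.cleanShot sh} := rfl

def tsC (I : Inst) (sh : Fin I.nshots) : ℕ → Finset (Atom I)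
  | 0 => ∅
  | 1 => {Atom.handempty true}
  | 2 => {Atom.holdingShot true sh}
  | _ + 3 => {Atom.cleanShot sh}

theorem tsC_zero (I : Inst) (sh : Fin I.nshots) : tsC I sh 0 = ∅ := rfl
theorem tsC_one (I : Inst) (sh : Fin I.nshots) : tsC I sh 1 = {Atom.handempty true} := rfl
theorem tsC_two (I : Inst) (sh : Fin I.nshots) : tsC I sh 2 = {Atom.holdingShot true sh} := rfl
theorem tsC_three (I : Inst) (sh : Fin I.nshots) : tsC I sh 3 = {Atom.cleanShot sh} := rfl

end ChainDefs

end Barman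
open Barman Barman.ChainDefs PlanningProblem in
/-- **Theorem.** For every Barman instance `P` (with a single, initially empty
shaker) and every `R`-reachable state `s` of `P` in which `u(s) > 0` (some shot
contains a beverage different from the one the goal specifies for it), the
planning problem that is like `P` but with initial state `s` and with goal
states `G_{r3}(s) = { s' : u(s') < u(s), g(s') = g(s), c1(s') = c1(s),
c2(s') = c2(s) }` has width at most `1`. -/
theorem barman_r3_subproblem_width_le_one (I : Barman.Inst)
    (s : (Barman.toProblem I).State)
    (hreach : PlanningProblem.RReachable (Barman.toProblem I) (Barman.feat I)
      Barman.sketch s)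
    (hu : 0 < (Barman.feat I s).num Barman.NF.u) :
    ((Barman.toProblem I).withInitGoal s
        {s' | (Barman.feat I s').num Barman.NF.u < (Barman.feat I s).num Barman.NF.u ∧
              (Barman.feat I s').num Barman.NF.g = (Barman.feat I s).num Barman.NF.g ∧
              (Barman.feat I s').bool Barman.BF.c1 = (Barman.feat I s).bool Barman.BF.c1 ∧
              (Barman.feat I s').bool Barman.BF.c2 = (Barman.feat I s).bool Barman.BF.c2}).width
      ≤ 1 := by
  classical
  have hInv : Inv I s := inv_reachable hreach
  obtain ⟨h1, h2, h3, h4⟩ := hInv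
  have hInv' : Inv I s := ⟨h1, h2, h3, h4⟩
  rw [feat_u] at hu
  obtain ⟨sh, b, hb, hwrong⟩ :
      ∃ sh b, s (.containsShot sh b) = true ∧ I.goalBev sh ≠ some b := by
    obtain ⟨sh, hsh⟩ := Set.nonempty_of_ncard_ne_zero hu.ne'
    obtain ⟨b, hb, hw⟩ := hsh
    exact ⟨sh, b, hb, hw⟩
  set G : Set ((Barman.toProblem I).State) :=
    {s' | (Barman.feat I s').num Barman.NF.u < (Barman.feat I s).num Barman.NF.u ∧
          (Barman.feat I s').num Barman.NF.g = (Barman.feat I s).num Barman.NF.g ∧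
          (Barman.feat I s').bool Barman.BF.c1 = (Barman.feat I s).bool Barman.BF.c1 ∧
          (Barman.feat I s').bool Barman.BF.c2 = (Barman.feat I s).bool Barman.BF.c2}
    with hG
  set P' := (Barman.toProblem I).withInitGoal s G with hP'
  have hcleanfalse : s (.cleanShot sh) = false := h1 sh b hb
  have hsnotG : s ∉ G := fun hx => absurd hx.1 (lt_irrefl _)
  by_cases hheld : ∃ h₀ sh₀ b₀, s (.containsShot sh₀ b₀) = true ∧
      I.goalBev sh₀ ≠ some b₀ ∧ s (.holdingShot h₀ sh₀) = true
  · -- some wrong shot is held: one-step plan, width 0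
    obtain ⟨h₀, sh₀, b₀, hc0, hw0, hh0⟩ := hheld
    have hpre : pre I s (.cleanShot h₀ sh₀) := ⟨hh0, h1 sh₀ b₀ hc0⟩
    have hmem : Barman.succ I s (.cleanShot h₀ sh₀) ∈ G :=
      clean_effect hInv' hc0 hw0 h₀ (fun _ _ => rfl) (fun _ => rfl)
    have hplan : P'.PlanFromFor P'.init P'.goal [Barman.Act.cleanShot h₀ sh₀] :=
      ⟨_, .cons hpre (.nil _), hmem⟩
    rw [PlanningProblem.width, if_neg (not_not_intro ⟨_, hplan⟩),
      if_pos ⟨_, hplan, Nat.le_refl 1⟩]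
    exact Nat.zero_le 1
  · push_neg at hheld
    have hunheld : ∀ h₀ sh₀ b₀, s (.containsShot sh₀ b₀) = true →
        I.goalBev sh₀ ≠ some b₀ → s (.holdingShot h₀ sh₀) = false := by
      intro h₀ sh₀ b₀ hc hw
      have := hheld h₀ sh₀ b₀ hc hw
      simpa using this
    have hontable : s (.ontableShot sh) = true :=
      h3 sh (fun h₀ => hunheld h₀ sh b hb hwrong)
    have hT2lower : ∀ a : Act I, pre I s a →
        Barman.succ I s a (.cleanShot sh) = true → False := by
      intro a ha hcl
      obtain ⟨h₂, rfl⟩ := clean_setter hcleanfalse hcl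
      have := ha.1
      rw [hunheld h₂ sh b hb hwrong] at this
      simp at this
    by_cases hhand : ∃ h₀, s (.handempty h₀) = true
    · -- CASE B : an empty hand
      obtain ⟨h₀, hh₀⟩ := hhand
      have hpre1 : pre I s (.graspShot h₀ sh) := ⟨hh₀, hontable⟩
      have hs₁hold : Barman.succ I s (.graspShot h₀ sh) (.holdingShot h₀ sh) = true := by
        simp [Barman.succ]
      have hs₁clean : Barman.succ I s (.graspShot h₀ sh) (.cleanShot sh) = false := by
        simp [Barman.succ, hcleanfalse]
      have hpre2 : pre I (Barman.succ I s (.graspShot h₀ sh)) (.cleanShot h₀ sh) :=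
        ⟨hs₁hold, hs₁clean⟩
      have hmem : Barman.succ I (Barman.succ I s (.graspShot h₀ sh)) (.cleanShot h₀ sh) ∈ G :=
        clean_effect hInv' hb hwrong h₀ (by intro u v; simp [Barman.succ])
          (by intro i0; simp [Barman.succ])
      have hplan : P'.PlanFromFor P'.init P'.goal
          [Barman.Act.graspShot h₀ sh, Barman.Act.cleanShot h₀ sh] :=
        ⟨_, .cons hpre1 (.cons hpre2 (.nil _)), hmem⟩
      by_cases h1p : ∃ π, P'.PlanFromFor P'.init P'.goal π ∧ π.length ≤ 1
      · rw [PlanningProblem.width, if_neg (not_not_intro ⟨_, hplan⟩), if_pos h1p]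
        exact Nat.zero_le 1
      · rw [PlanningProblem.width, if_neg (not_not_intro ⟨_, hplan⟩), if_neg h1p]
        apply Nat.sInf_le
        refine ⟨2, tsB I h₀ sh, ?_, ?_, ?_, ?_⟩
        · intro i hi
          interval_cases i <;>
            simp [tsB_zero, tsB_one, tsB_two] <;> exact Nat.le_of_ble_eq_true rfl
        · exact mem_tuple_empty
        · intro i hi π hopt
          interval_cases i
          · -- extend [] by grasp
            have hπ : π.length ≤ 0 := hopt.2 [] ⟨P'.init, .nil _, mem_tuple_empty⟩
            have hπnil : π = [] := List.eq_nil_of_length_eq_zero (Nat.le_zero.mp hπ)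
            subst hπnil
            refine ⟨.graspShot h₀ sh,
              ⟨_, .cons hpre1 (.nil _), mem_tuple_singleton.mpr hs₁hold⟩, ?_⟩
            intro π' hπ'
            have : 1 ≤ π'.length := len_ge_one hπ' (by
              intro hmem
              exact Bool.noConfusion
                ((hunheld h₀ sh b hb hwrong).symm.trans (mem_tuple_singleton.mp hmem)))
            exact this
          · -- extend [grasp] by clean
            have hplan1 : P'.PlanFromFor P'.init
                (P'.TupleStates (tsB I h₀ sh 1)) [.graspShot h₀ sh] :=
              ⟨_, .cons hpre1 (.nil _), mem_tuple_singleton.mpr hs₁hold⟩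
            have hlow : 1 ≤ π.length := len_ge_one hopt.1 (by
              intro hmem
              exact Bool.noConfusion
                ((hunheld h₀ sh b hb hwrong).symm.trans (mem_tuple_singleton.mp hmem)))
            have hlen : π.length = 1 := le_antisymm (hopt.2 _ hplan1) hlow
            obtain ⟨a, rfl⟩ := List.length_eq_one_iff.mp hlen
            obtain ⟨σ, he, hmemT⟩ := hopt.1
            rw [exec_cons_iff] at he
            obtain ⟨ha, he⟩ := he
            rw [exec_nil_iff] at he
            subst he
            have hmemT' : Barman.succ I s a (.holdingShot h₀ sh) = true :=
              mem_tuple_singleton.mp hmemT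
            have haeq : a = .graspShot h₀ sh :=
              holding_setter (hunheld h₀ sh b hb hwrong) hmemT'
            subst haeq
            refine ⟨.cleanShot h₀ sh,
              ⟨Barman.succ I (Barman.succ I s (.graspShot h₀ sh)) (.cleanShot h₀ sh),
                .cons hpre1 (.cons hpre2 (.nil _)),
                mem_tuple_singleton.mpr (by simp [Barman.succ])⟩, ?_⟩
            intro π' hπ'
            have : 2 ≤ π'.length := len_ge_two hπ'
              (by
                intro hmem
                exact Bool.noConfusion (hcleanfalse.symm.trans (mem_tuple_singleton.mp hmem)))
              (by
                intro a' ha' hmem'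
                exact hT2lower a' ha' (mem_tuple_singleton.mp hmem'))
            exact this
        · intro π hopt
          have hplan2 : P'.PlanFromFor P'.init (P'.TupleStates (tsB I h₀ sh 2))
              [.graspShot h₀ sh, .cleanShot h₀ sh] :=
            ⟨Barman.succ I (Barman.succ I s (.graspShot h₀ sh)) (.cleanShot h₀ sh),
              .cons hpre1 (.cons hpre2 (.nil _)),
              mem_tuple_singleton.mpr (by simp [Barman.succ])⟩
          have hlow : 2 ≤ π.length := len_ge_two hopt.1
            (by
              intro hmem
              exact Bool.noConfusion (hcleanfalse.symm.trans (mem_tuple_singleton.mp hmem)))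
            (by
              intro a' ha' hmem'
              exact hT2lower a' ha' (mem_tuple_singleton.mp hmem'))
          have hlen : π.length = 2 := le_antisymm (hopt.2 _ hplan2) hlow
          obtain ⟨a1, a2, rfl⟩ := List.length_eq_two.mp hlen
          obtain ⟨σ, he, hmemT⟩ := hopt.1
          rw [exec_cons_iff] at he
          obtain ⟨ha1, he⟩ := he
          rw [exec_cons_iff] at he
          obtain ⟨ha2, he⟩ := he
          rw [exec_nil_iff] at he
          subst he
          have hmemT' : Barman.succ I (Barman.succ I s a1) a2 (.cleanShot sh) = true :=
            mem_tuple_singleton.mp hmemT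
          cases hx : Barman.succ I s a1 (.cleanShot sh) with
          | true =>
              exact (hT2lower a1 ha1 hx).elim
          | false =>
              obtain ⟨h₂, haeq2⟩ := clean_setter hx hmemT'
              subst haeq2
              have hh2 : Barman.succ I s a1 (.holdingShot h₂ sh) = true := ha2.1
              have haeq1 : a1 = .graspShot h₂ sh :=
                holding_setter (hunheld h₂ sh b hb hwrong) hh2
              subst haeq1
              have hmemG : Barman.succ I (Barman.succ I s (.graspShot h₂ sh))
                  (.cleanShot h₂ sh) ∈ G :=
                clean_effect hInv' hb hwrong h₂ (by intro u v; simp [Barman.succ])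
                  (by intro i0; simp [Barman.succ])
              refine ⟨⟨_, .cons ha1 (.cons ha2 (.nil _)), hmemG⟩, ?_⟩
              intro π' hπ'
              have : ¬ π'.length ≤ 1 := fun hle => h1p ⟨π', hπ', hle⟩
              change 2 ≤ π'.length
              omega
    · -- CASE C : both hands full
      push_neg at hhand
      have hfull : ∀ h₀, s (.handempty h₀) = false := by
        intro h₀
        have := hhand h₀
        simpa using this
      -- generic facts about a putdown action
      have putdown_keeps : ∀ (σ : (toProblem I).State) (hh : Bool) (a : Act I),
          ((∃ x, a = Barman.Act.putdownShot hh x) ∨ a = .putdownShaker hh) →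
          (∀ u v, Barman.succ I σ a (.containsShot u v) = σ (.containsShot u v)) ∧
          (∀ i0, Barman.succ I σ a (.inShaker i0) = σ (.inShaker i0)) ∧
          (∀ u, Barman.succ I σ a (.cleanShot u) = σ (.cleanShot u)) ∧
          (Barman.succ I σ a (.handempty hh) = true) ∧
          (∀ u, σ (.ontableShot u) = true → Barman.succ I σ a (.ontableShot u) = true) := by
        intro σ hh a hput
        rcases hput with ⟨x, rfl⟩ | rfl
        · refine ⟨by intro u v; simp [Barman.succ], by intro i0; simp [Barman.succ],
            by intro u; simp [Barman.succ], by simp [Barman.succ], ?_⟩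
          intro u hu
          by_cases e : u = x <;> simp [Barman.succ, e, hu]
        · exact ⟨by intro u v; simp [Barman.succ], by intro i0; simp [Barman.succ],
            by intro u; simp [Barman.succ], by simp [Barman.succ],
            by intro u hu; simpa [Barman.succ] using hu⟩
      obtain ⟨a₀, hpre₀, hput₀⟩ : ∃ a₀, pre I s a₀ ∧
          ((∃ x, a₀ = Barman.Act.putdownShot true x) ∨ a₀ = .putdownShaker true) := by
        rcases h4 true (hfull true) with ⟨x, hx⟩ | hx
        · exact ⟨.putdownShot true x, hx, Or.inl ⟨x, rfl⟩⟩
        · exact ⟨.putdownShaker true, hx, Or.inr rfl⟩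
      have hf₀ := putdown_keeps s true a₀ hput₀
      have hpreg : pre I (Barman.succ I s a₀) (.graspShot true sh) :=
        ⟨hf₀.2.2.2.1, hf₀.2.2.2.2 sh hontable⟩
      have hσ₂hold : Barman.succ I (Barman.succ I s a₀) (.graspShot true sh)
          (.holdingShot true sh) = true := by simp [Barman.succ]
      have hσ₂clean : Barman.succ I (Barman.succ I s a₀) (.graspShot true sh)
          (.cleanShot sh) = false := by
        have : Barman.succ I (Barman.succ I s a₀) (.graspShot true sh) (.cleanShot sh) =
            Barman.succ I s a₀ (.cleanShot sh) := by simp [Barman.succ]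
        rw [this, hf₀.2.2.1, hcleanfalse]
      have hprec : pre I (Barman.succ I (Barman.succ I s a₀) (.graspShot true sh))
          (.cleanShot true sh) := ⟨hσ₂hold, hσ₂clean⟩
      have hmem3 : Barman.succ I (Barman.succ I (Barman.succ I s a₀) (.graspShot true sh))
          (.cleanShot true sh) ∈ G := by
        refine clean_effect hInv' hb hwrong true ?_ ?_
        · intro u v
          have e1 : Barman.succ I (Barman.succ I s a₀) (.graspShot true sh)
              (.containsShot u v) = Barman.succ I s a₀ (.containsShot u v) := by
            simp [Barman.succ]
          rw [e1, hf₀.1]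
        · intro i0
          have e1 : Barman.succ I (Barman.succ I s a₀) (.graspShot true sh)
              (.inShaker i0) = Barman.succ I s a₀ (.inShaker i0) := by
            simp [Barman.succ]
          rw [e1, hf₀.2.1]
      have hplan3 : P'.PlanFromFor P'.init P'.goal
          [a₀, Barman.Act.graspShot true sh, Barman.Act.cleanShot true sh] :=
        ⟨_, .cons hpre₀ (.cons hpreg (.cons hprec (.nil _))), hmem3⟩
      -- no clean of sh within two steps
      have htwo_clean : ∀ a1 : Act I, pre I s a1 → ∀ a2 : Act I,
          pre I (Barman.succ I s a1) a2 →
          Barman.succ I (Barman.succ I s a1) a2 (.cleanShot sh) = true → False := by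
        intro a1 ha1 a2 ha2 hcl
        cases hz : Barman.succ I s a1 (.cleanShot sh) with
        | true => exact hT2lower a1 ha1 hz
        | false =>
            obtain ⟨h₂, rfl⟩ := clean_setter hz hcl
            have hh2 : Barman.succ I s a1 (.holdingShot h₂ sh) = true := ha2.1
            have haeq1 : a1 = .graspShot h₂ sh :=
              holding_setter (hunheld h₂ sh b hb hwrong) hh2
            subst haeq1
            exact Bool.noConfusion ((hfull h₂).symm.trans ha1.1)
      by_cases h1p : ∃ π, P'.PlanFromFor P'.init P'.goal π ∧ π.length ≤ 1
      · rw [PlanningProblem.width, if_neg (not_not_intro ⟨_, hplan3⟩), if_pos h1p]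
        exact Nat.zero_le 1
      · rw [PlanningProblem.width, if_neg (not_not_intro ⟨_, hplan3⟩), if_neg h1p]
        apply Nat.sInf_le
        refine ⟨3, tsC I sh, ?_, ?_, ?_, ?_⟩
        · intro i hi
          interval_cases i <;>
            simp [tsC_zero, tsC_one, tsC_two, tsC_three] <;> exact Nat.le_of_ble_eq_true rfl
        · exact mem_tuple_empty
        · intro i hi π hopt
          interval_cases i
          · -- extend [] by the putdown a₀
            have hπ : π.length ≤ 0 := hopt.2 [] ⟨P'.init, .nil _, mem_tuple_empty⟩
            have hπnil : π = [] := List.eq_nil_of_length_eq_zero (Nat.le_zero.mp hπ)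
            subst hπnil
            refine ⟨a₀, ⟨Barman.succ I s a₀, .cons hpre₀ (.nil _),
              mem_tuple_singleton.mpr hf₀.2.2.2.1⟩, ?_⟩
            intro π' hπ'
            exact len_ge_one hπ' (by
              intro hmem
              exact Bool.noConfusion
                ((hfull true).symm.trans (mem_tuple_singleton.mp hmem)))
          · -- extend a putdown by grasp
            have hplan1 : P'.PlanFromFor P'.init (P'.TupleStates (tsC I sh 1)) [a₀] :=
              ⟨Barman.succ I s a₀, .cons hpre₀ (.nil _), mem_tuple_singleton.mpr hf₀.2.2.2.1⟩
            have hlow : 1 ≤ π.length := len_ge_one hopt.1 (by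
              intro hmem
              exact Bool.noConfusion
                ((hfull true).symm.trans (mem_tuple_singleton.mp hmem)))
            have hlen : π.length = 1 := le_antisymm (hopt.2 _ hplan1) hlow
            obtain ⟨a, rfl⟩ := List.length_eq_one_iff.mp hlen
            obtain ⟨σ, he, hmemT⟩ := hopt.1
            rw [exec_cons_iff] at he
            obtain ⟨ha, he⟩ := he
            rw [exec_nil_iff] at he
            subst he
            have hmemT' : Barman.succ I s a (.handempty true) = true :=
              mem_tuple_singleton.mp hmemT
            have hputa : (∃ x, a = Barman.Act.putdownShot true x) ∨
                a = .putdownShaker true := handempty_setter (hfull true) hmemT'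
            have hfa := putdown_keeps s true a hputa
            have hpreg' : pre I (Barman.succ I s a) (.graspShot true sh) :=
              ⟨hfa.2.2.2.1, hfa.2.2.2.2 sh hontable⟩
            refine ⟨.graspShot true sh,
              ⟨Barman.succ I (Barman.succ I s a) (.graspShot true sh),
                .cons ha (.cons hpreg' (.nil _)),
                mem_tuple_singleton.mpr (by simp [Barman.succ])⟩, ?_⟩
            intro π' hπ'
            exact len_ge_two hπ'
              (by
                intro hmem
                exact Bool.noConfusion ((hunheld true sh b hb hwrong).symm.trans
                  (mem_tuple_singleton.mp hmem)))
              (by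
                intro a' ha' hmem'
                have hm : Barman.succ I s a' (.holdingShot true sh) = true :=
                  mem_tuple_singleton.mp hmem'
                have : a' = .graspShot true sh :=
                  holding_setter (hunheld true sh b hb hwrong) hm
                subst this
                exact Bool.noConfusion ((hfull true).symm.trans ha'.1))
          · -- extend a putdown+grasp by clean
            have hplan2 : P'.PlanFromFor P'.init (P'.TupleStates (tsC I sh 2))
                [a₀, .graspShot true sh] :=
              ⟨Barman.succ I (Barman.succ I s a₀) (.graspShot true sh),
                .cons hpre₀ (.cons hpreg (.nil _)), mem_tuple_singleton.mpr hσ₂hold⟩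
            have hlow : 2 ≤ π.length := len_ge_two hopt.1
              (by
                intro hmem
                exact Bool.noConfusion ((hunheld true sh b hb hwrong).symm.trans
                  (mem_tuple_singleton.mp hmem)))
              (by
                intro a' ha' hmem'
                have hm : Barman.succ I s a' (.holdingShot true sh) = true :=
                  mem_tuple_singleton.mp hmem'
                have : a' = .graspShot true sh :=
                  holding_setter (hunheld true sh b hb hwrong) hm
                subst this
                exact Bool.noConfusion ((hfull true).symm.trans ha'.1))
            have hlen : π.length = 2 := le_antisymm (hopt.2 _ hplan2) hlow
            obtain ⟨a1, a2, rfl⟩ := List.length_eq_two.mp hlen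
            obtain ⟨σ, he, hmemT⟩ := hopt.1
            rw [exec_cons_iff] at he
            obtain ⟨ha1, he⟩ := he
            rw [exec_cons_iff] at he
            obtain ⟨ha2, he⟩ := he
            rw [exec_nil_iff] at he
            subst he
            have hmemT' : Barman.succ I (Barman.succ I s a1) a2
                (.holdingShot true sh) = true := mem_tuple_singleton.mp hmemT
            cases hy : Barman.succ I s a1 (.holdingShot true sh) with
            | true =>
                have : a1 = .graspShot true sh :=
                  holding_setter (hunheld true sh b hb hwrong) hy
                subst this
                exact (Bool.noConfusion ((hfull true).symm.trans ha1.1) : False).elim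
            | false =>
                have haeq2 : a2 = .graspShot true sh := holding_setter hy hmemT'
                subst haeq2
                have hhe1 : Barman.succ I s a1 (.handempty true) = true := ha2.1
                have hputa1 : (∃ x, a1 = Barman.Act.putdownShot true x) ∨
                    a1 = .putdownShaker true := handempty_setter (hfull true) hhe1
                have hfa1 := putdown_keeps s true a1 hputa1
                have hcl2 : Barman.succ I (Barman.succ I s a1) (.graspShot true sh)
                    (.cleanShot sh) = false := by
                  have e1 : Barman.succ I (Barman.succ I s a1) (.graspShot true sh)
                      (.cleanShot sh) = Barman.succ I s a1 (.cleanShot sh) := by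
                    simp [Barman.succ]
                  rw [e1, hfa1.2.2.1, hcleanfalse]
                have hprec' : pre I (Barman.succ I (Barman.succ I s a1)
                    (.graspShot true sh)) (.cleanShot true sh) := ⟨hmemT', hcl2⟩
                refine ⟨.cleanShot true sh,
                  ⟨Barman.succ I (Barman.succ I (Barman.succ I s a1)
                      (.graspShot true sh)) (.cleanShot true sh),
                    .cons ha1 (.cons ha2 (.cons hprec' (.nil _))),
                    mem_tuple_singleton.mpr (by simp [Barman.succ])⟩, ?_⟩
                intro π' hπ'
                exact len_ge_three hπ'
                  (by
                    intro hmem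
                    exact Bool.noConfusion
                      (hcleanfalse.symm.trans (mem_tuple_singleton.mp hmem)))
                  (by
                    intro a' ha' hmem'
                    exact hT2lower a' ha' (mem_tuple_singleton.mp hmem'))
                  (by
                    intro a' ha' b' hb' hmem'
                    exact htwo_clean a' ha' b' hb' (mem_tuple_singleton.mp hmem'))
        · intro π hopt
          have hplanT3 : P'.PlanFromFor P'.init (P'.TupleStates (tsC I sh 3))
              [a₀, .graspShot true sh, .cleanShot true sh] :=
            ⟨Barman.succ I (Barman.succ I (Barman.succ I s a₀) (.graspShot true sh))
                (.cleanShot true sh),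
              .cons hpre₀ (.cons hpreg (.cons hprec (.nil _))),
              mem_tuple_singleton.mpr (by simp [Barman.succ])⟩
          have hlow : 3 ≤ π.length := len_ge_three hopt.1
            (by
              intro hmem
              exact Bool.noConfusion
                (hcleanfalse.symm.trans (mem_tuple_singleton.mp hmem)))
            (by
              intro a' ha' hmem'
              exact hT2lower a' ha' (mem_tuple_singleton.mp hmem'))
            (by
              intro a' ha' b' hb' hmem'
              exact htwo_clean a' ha' b' hb' (mem_tuple_singleton.mp hmem'))
          have hlen : π.length = 3 := le_antisymm (hopt.2 _ hplanT3) hlow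
          obtain ⟨a1, a2, a3, rfl⟩ := List.length_eq_three.mp hlen
          obtain ⟨σ, he, hmemT⟩ := hopt.1
          rw [exec_cons_iff] at he
          obtain ⟨ha1, he⟩ := he
          rw [exec_cons_iff] at he
          obtain ⟨ha2, he⟩ := he
          rw [exec_cons_iff] at he
          obtain ⟨ha3, he⟩ := he
          rw [exec_nil_iff] at he
          subst he
          have hmemT' : Barman.succ I (Barman.succ I (Barman.succ I s a1) a2) a3
              (.cleanShot sh) = true := mem_tuple_singleton.mp hmemT
          cases hz1 : Barman.succ I s a1 (.cleanShot sh) with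
          | true => exact (hT2lower a1 ha1 hz1).elim
          | false =>
          cases hz2 : Barman.succ I (Barman.succ I s a1) a2 (.cleanShot sh) with
          | true => exact (htwo_clean a1 ha1 a2 ha2 hz2).elim
          | false =>
          obtain ⟨h₃, haeq3⟩ := clean_setter hz2 hmemT'
          subst haeq3
          have hhold3 : Barman.succ I (Barman.succ I s a1) a2
              (.holdingShot h₃ sh) = true := ha3.1
          cases hy1 : Barman.succ I s a1 (.holdingShot h₃ sh) with
          | true =>
              have : a1 = .graspShot h₃ sh :=
                holding_setter (hunheld h₃ sh b hb hwrong) hy1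
              subst this
              exact (Bool.noConfusion ((hfull h₃).symm.trans ha1.1) : False).elim
          | false =>
          have haeq2 : a2 = .graspShot h₃ sh := holding_setter hy1 hhold3
          subst haeq2
          have hhe1 : Barman.succ I s a1 (.handempty h₃) = true := ha2.1
          have hputa1 : (∃ x, a1 = Barman.Act.putdownShot h₃ x) ∨
              a1 = .putdownShaker h₃ := handempty_setter (hfull h₃) hhe1
          have hfa1 := putdown_keeps s h₃ a1 hputa1
          have hmemG : Barman.succ I (Barman.succ I (Barman.succ I s a1)
              (.graspShot h₃ sh)) (.cleanShot h₃ sh) ∈ G := by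
            refine clean_effect hInv' hb hwrong h₃ ?_ ?_
            · intro u v
              have e1 : Barman.succ I (Barman.succ I s a1) (.graspShot h₃ sh)
                  (.containsShot u v) = Barman.succ I s a1 (.containsShot u v) := by
                simp [Barman.succ]
              rw [e1, hfa1.1]
            · intro i0
              have e1 : Barman.succ I (Barman.succ I s a1) (.graspShot h₃ sh)
                  (.inShaker i0) = Barman.succ I s a1 (.inShaker i0) := by
                simp [Barman.succ]
              rw [e1, hfa1.2.1]
          refine ⟨⟨_, .cons ha1 (.cons ha2 (.cons ha3 (.nil _))), hmemG⟩, ?_⟩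
          intro π' hπ'
          have h2le : 2 ≤ π'.length := by
            by_contra hc
            exact h1p ⟨π', hπ', by omega⟩
          have h3le : 3 ≤ π'.length := len_ge_three hπ' hsnotG
            (by
              intro a ha hmem'
              exact h1p ⟨[a], ⟨_, .cons ha (.nil _), hmem'⟩, by simp⟩)
            (by
              intro a ha b' hb' hmem'
              exact absurd hmem'.1 (no_u_decrease_two hunheld hfull ha hb'))
          exact h3le
end

section
/- There is no infinite sequence (cg_i, cr_i, sgk_i, sk_i, sgt_i, st_i) of tuples in ℕ × ℕ × Bool × Bool × Bool × Bool such that for every i one of the following holds: (rule r1) cg_i > 0, sgk_i = false, sgt_i = false, sgk_(i+1) = true, sk_(i+1) = true, and cg, cr, sgt, st unchanged; (rule r2) cg_i = 0, cr_i > 0, sk_i = false, st_i = false, sk_(i+1) = true, and cg, cr, sgk, sgt, st unchanged; (rule r3) cg_i > 0, sgk_i = true, sgt_i = false, sgt_(i+1) = true, st_(i+1) = true, cg, cr unchanged (sgk, sk arbitrary); (rule r4) cg_i = 0, cr_i > 0, sk_i = true, st_i = false, st_(i+1) = true, cg, cr unchanged (sgk, sk, sgt arbitrary); (rule r5) cg_i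 > 0, sgt_i = true, cg_(i+1) < cg_i, cr, sgk, sk unchanged (sgt, st arbitrary); or (rule r6) cg_i = 0, cr_i > 0, st_i = true, cr_(i+1) < cr_i, cg, sgk, sk unchanged (sgt, st arbitrary). Hence the Childsnack sketch is terminating. -/
/-- Termination of the Childsnack sketch with rules
`r1 = {cg>0, ¬sgk, ¬sgt} ↦ {sgk, sk}`,
`r2 = {cg=0, cr>0, ¬sk, ¬st} ↦ {sk}`,
`r3 = {cg>0, sgk, ¬sgt} ↦ {sgk?, sk?, sgt, st}`,
`r4 = {cg=0, cr>0, sk, ¬st} ↦ {sgk?, sk?, sgt?, st}`,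
`r5 = {cg>0, sgt} ↦ {cg↓, sgt?, st?}` and
`r6 = {cg=0, cr>0, st} ↦ {cr↓, sgt?, st?}`:
there is no infinite sequence of feature valuations
`(cgᵢ, crᵢ, sgkᵢ, skᵢ, sgtᵢ, stᵢ)` in `ℕ × ℕ × Bool × Bool × Bool × Bool`
in which every consecutive pair satisfies one of the six rules. -/
theorem childsnack_sketch_terminating :
    ¬ ∃ (cg cr : ℕ → ℕ) (sgk sk sgt st : ℕ → Bool),
        ∀ i : ℕ,
          (0 < cg i ∧ sgk i = false ∧ sgt i = false ∧
            sgk (i + 1) = true ∧ sk (i + 1) = true ∧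
            cg (i + 1) = cg i ∧ cr (i + 1) = cr i ∧
            sgt (i + 1) = sgt i ∧ st (i + 1) = st i) ∨
          (cg i = 0 ∧ 0 < cr i ∧ sk i = false ∧ st i = false ∧
            sk (i + 1) = true ∧
            cg (i + 1) = cg i ∧ cr (i + 1) = cr i ∧
            sgk (i + 1) = sgk i ∧ sgt (i + 1) = sgt i ∧ st (i + 1) = st i) ∨
          (0 < cg i ∧ sgk i = true ∧ sgt i = false ∧
            sgt (i + 1) = true ∧ st (i + 1) = true ∧
            cg (i + 1) = cg i ∧ cr (i + 1) = cr i) ∨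
          (cg i = 0 ∧ 0 < cr i ∧ sk i = true ∧ st i = false ∧
            st (i + 1) = true ∧
            cg (i + 1) = cg i ∧ cr (i + 1) = cr i) ∨
          (0 < cg i ∧ sgt i = true ∧ cg (i + 1) < cg i ∧
            cr (i + 1) = cr i ∧ sgk (i + 1) = sgk i ∧ sk (i + 1) = sk i) ∨
          (cg i = 0 ∧ 0 < cr i ∧ st i = true ∧ cr (i + 1) < cr i ∧
            cg (i + 1) = cg i ∧ sgk (i + 1) = sgk i ∧ sk (i + 1) = sk i) := by
  rintro ⟨cg, cr, sgk, sk, sgt, st, h⟩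
  set f : ℕ → ℕ := fun i =>
    6 * cg i + 6 * cr i +
      (if 0 < cg i then (if sgt i then 0 else if sgk i then 2 else 3)
       else (if st i then 0 else if sk i then 2 else 3)) with hf
  have hdec : ∀ i, f (i + 1) < f i := by
    intro i
    have b1 : (if sgt (i+1) = true then (0:ℕ) else if sgk (i+1) = true then 2 else 3) ≤ 3 := by
      split
      · omega
      · split_ifs <;> omega
    have b2 : (if st (i+1) = true then (0:ℕ) else if sk (i+1) = true then 2 else 3) ≤ 3 := by
      split
      · omega
      · split_ifs <;> omega
    have b3 : (if sgk (i+1) = true then (2:ℕ) else 3) ≤ 3 := by split_ifs <;> omega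
    have b4 : (if sk (i+1) = true then (2:ℕ) else 3) ≤ 3 := by split_ifs <;> omega
    rcases h i with
      ⟨h1, h2, h3, h4, h5, h6, h7, h8, h9⟩ |
      ⟨h1, h2, h3, h4, h5, h6, h7, h8, h9, h10⟩ |
      ⟨h1, h2, h3, h4, h5, h6, h7⟩ |
      ⟨h1, h2, h3, h4, h5, h6, h7⟩ |
      ⟨h1, h2, h3, h4, h5, h6⟩ |
      ⟨h1, h2, h3, h4, h5, h6, h7⟩
    · simp only [hf, h4, h6, h7, h8, h2, h3, h1, if_pos]
      norm_num
    · simp only [hf, h1, h3, h4, h5, h6, h7, h10]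
      norm_num
    · simp only [hf, h2, h3, h4, h6, h7, h1, if_pos]
      norm_num
    · simp only [hf, h1, h3, h4, h5, h6, h7]
      norm_num
    · simp only [hf, h2, h4, if_pos h1]
      norm_num
      split_ifs <;> omega
    · simp only [hf, h1, h3, h5, if_pos]
      norm_num
      split_ifs <;> omega
  have key : ∀ i, f i + i ≤ f 0 := by
    intro i
    induction i with
    | zero => omega
    | succ n ih => have := hdec n; omega
  have := key (f 0 + 1)
  omega
end

section
/- For every Childsnack instance P and every R-reachable state s of P in which cg(s) > 0 and sgt(s) = true (there is an unserved gluten-allergic child and a gluten-free sandwich on a tray), the planning problem that is like P but with initial state s and with goal states G_{r5}(s) = { s' : cg(s') < cg(s), cr(s') = cr(s), sgk(s') = sgk(s), sk(s') = sk(s) } has width at most 1. -/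
attribute [local instance 0] Classical.propDecidable

/-! ## The Childsnack domain -/

namespace Childsnack

/-- A Childsnack instance: children (gluten-allergic or not) waiting at tables,
breads and contents (gluten-free or not), possible sandwiches, and trays that
move between the kitchen and the tables. -/
structure Inst where
  nchildren : ℕ
  ntables : ℕ
  nbreads : ℕ
  ncontents : ℕ
  nsandwiches : ℕ
  ntrays : ℕ
  allergic : Fin nchildren → Bool
  seat : Fin nchildren → Fin ntables
  gfBread : Fin nbreads → Bool
  gfContent : Fin ncontents → Bool
  /-- initial position of each tray (`none` = kitchen) -/
  tray0 : Fin ntrays → Option (Fin ntables)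

/-- A place is the kitchen (`none`) or a table. -/
abbrev Place (I : Inst) := Option (Fin I.ntables)

inductive Atom (I : Inst)
  | atKitchenBread (b : Fin I.nbreads)
  | atKitchenContent (c : Fin I.ncontents)
  | atKitchenSandwich (sd : Fin I.nsandwiches)
  | noGluten (sd : Fin I.nsandwiches)
  | ontray (sd : Fin I.nsandwiches) (t : Fin I.ntrays)
  | trayAt (t : Fin I.ntrays) (p : Option (Fin I.ntables))
  | served (ch : Fin I.nchildren)
  | notexist (sd : Fin I.nsandwiches)
  deriving DecidableEq, Fintype

inductive Act (I : Inst)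
  | makeGF (sd : Fin I.nsandwiches) (b : Fin I.nbreads) (c : Fin I.ncontents)
  | make (sd : Fin I.nsandwiches) (b : Fin I.nbreads) (c : Fin I.ncontents)
  | putOnTray (sd : Fin I.nsandwiches) (t : Fin I.ntrays)
  | serveGF (sd : Fin I.nsandwiches) (t : Fin I.ntrays) (ch : Fin I.nchildren)
  | serve (sd : Fin I.nsandwiches) (t : Fin I.ntrays) (ch : Fin I.nchildren)
  | moveTray (t : Fin I.ntrays) (p1 p2 : Option (Fin I.ntables))

/-- Action preconditions. -/
def pre (I : Inst) (s : Atom I → Bool) : Act I → Prop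
  | .makeGF sd b c =>
      s (.atKitchenBread b) = true ∧ s (.atKitchenContent c) = true ∧
      I.gfBread b = true ∧ I.gfContent c = true ∧ s (.notexist sd) = true
  | .make sd b c =>
      s (.atKitchenBread b) = true ∧ s (.atKitchenContent c) = true ∧
      s (.notexist sd) = true
  | .putOnTray sd t =>
      s (.atKitchenSandwich sd) = true ∧ s (.trayAt t none) = true
  | .serveGF sd t ch =>
      I.allergic ch = true ∧ s (.ontray sd t) = true ∧ s (.noGluten sd) = true ∧
      s (.trayAt t (some (I.seat ch))) = true ∧ s (.served ch) = false
  | .serve sd t ch =>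
      I.allergic ch = false ∧ s (.ontray sd t) = true ∧
      s (.trayAt t (some (I.seat ch))) = true ∧ s (.served ch) = false
  | .moveTray t p1 _ => s (.trayAt t p1) = true

/-- Action effects. -/
def succ (I : Inst) (s : Atom I → Bool) : Act I → Atom I → Bool
  | .makeGF sd b c => fun a =>
      if a = .atKitchenSandwich sd then true else if a = .noGluten sd then true
      else if a = .atKitchenBread b then false
      else if a = .atKitchenContent c then false
      else if a = .notexist sd then false else s a
  | .make sd b c => fun a =>
      if a = .atKitchenSandwich sd then true
      else if a = .atKitchenBread b then false
      else if a = .atKitchenContent c then false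
      else if a = .notexist sd then false else s a
  | .putOnTray sd t => fun a =>
      if a = .ontray sd t then true
      else if a = .atKitchenSandwich sd then false else s a
  | .serveGF sd t ch => fun a =>
      if a = .served ch then true else if a = .ontray sd t then false else s a
  | .serve sd t ch => fun a =>
      if a = .served ch then true else if a = .ontray sd t then false else s a
  | .moveTray t p1 p2 => fun a =>
      if a = .trayAt t p2 then true else if a = .trayAt t p1 then false else s a

def init (I : Inst) : Atom I → Bool
  | .atKitchenBread _ => true
  | .atKitchenContent _ => true
  | .atKitchenSandwich _ => false
  | .noGluten _ => false
  | .ontray _ _ => false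
  | .trayAt t p => decide (I.tray0 t = p)
  | .served _ => false
  | .notexist _ => true

/-- The induced classical planning problem; the goal is to serve all children. -/
def toProblem (I : Inst) : PlanningProblem where
  Atom := Atom I
  fintypeAtom := inferInstance
  Action := Act I
  init := init I
  goal := {s | ∀ ch, s (.served ch) = true}
  applicable := fun s => {a | pre I s a}
  succ := succ I

/-- The Boolean features `sgk`, `sk`, `sgt` and `st`. -/
inductive BF | sgk | sk | sgt | st
  deriving DecidableEq

instance : Fintype BF := ⟨{.sgk, .sk, .sgt, .st}, fun x => by cases x <;> simp⟩

/-- The numerical features `cg` and `cr`. -/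
inductive NF | cg | cr
  deriving DecidableEq

instance : Fintype NF := ⟨{.cg, .cr}, fun x => by cases x <;> simp⟩

/-- `cg`/`cr`: numbers of unserved gluten-allergic resp. non-allergic children;
`sgk`/`sk`: there is a gluten-free sandwich resp. a sandwich in the kitchen;
`sgt`/`st`: there is a gluten-free sandwich resp. a sandwich on a tray. -/
noncomputable def feat (I : Inst) (s : (toProblem I).State) : FVal BF NF where
  bool := fun b =>
    match b with
    | .sgk => if ∃ sd, s (.atKitchenSandwich sd) = true ∧ s (.noGluten sd) = true
              then true else false
    | .sk => if ∃ sd, s (.atKitchenSandwich sd) = true then true else false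
    | .sgt => if ∃ sd t, s (.ontray sd t) = true ∧ s (.noGluten sd) = true
              then true else false
    | .st => if ∃ sd t, s (.ontray sd t) = true then true else false
  num := fun v =>
    match v with
    | .cg => Set.ncard {ch : Fin I.nchildren |
        I.allergic ch = true ∧ s (.served ch) = false}
    | .cr => Set.ncard {ch : Fin I.nchildren |
        I.allergic ch = false ∧ s (.served ch) = false}

/-- `r1 = {cg>0, ¬sgk, ¬sgt} ↦ {sgk, sk}`. -/
def r1 : SketchRule BF NF where
  condB := fun b => match b with
    | .sgk => some .isFalse | .sgt => some .isFalse | _ => none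
  condN := fun v => match v with | .cg => some .gt0 | .cr => none
  effB := fun b => match b with
    | .sgk => some .setTrue | .sk => some .setTrue | _ => none
  effN := fun _ => none

/-- `r2 = {cg=0, cr>0, ¬sk, ¬st} ↦ {sk}`. -/
def r2 : SketchRule BF NF where
  condB := fun b => match b with
    | .sk => some .isFalse | .st => some .isFalse | _ => none
  condN := fun v => match v with | .cg => some .eq0 | .cr => some .gt0
  effB := fun b => match b with | .sk => some .setTrue | _ => none
  effN := fun _ => none

/-- `r3 = {cg>0, sgk, ¬sgt} ↦ {sgk?, sk?, sgt, st}`. -/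
def r3 : SketchRule BF NF where
  condB := fun b => match b with
    | .sgk => some .isTrue | .sgt => some .isFalse | _ => none
  condN := fun v => match v with | .cg => some .gt0 | .cr => none
  effB := fun b => match b with
    | .sgk => some .anyChange | .sk => some .anyChange
    | .sgt => some .setTrue | .st => some .setTrue
  effN := fun _ => none

/-- `r4 = {cg=0, cr>0, sk, ¬st} ↦ {sgk?, sk?, sgt?, st}`. -/
def r4 : SketchRule BF NF where
  condB := fun b => match b with
    | .sk => some .isTrue | .st => some .isFalse | _ => none
  condN := fun v => match v with | .cg => some .eq0 | .cr => some .gt0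
  effB := fun b => match b with
    | .sgk => some .anyChange | .sk => some .anyChange
    | .sgt => some .anyChange | .st => some .setTrue
  effN := fun _ => none

/-- `r5 = {cg>0, sgt} ↦ {cg↓, sgt?, st?}`. -/
def r5 : SketchRule BF NF where
  condB := fun b => match b with | .sgt => some .isTrue | _ => none
  condN := fun v => match v with | .cg => some .gt0 | .cr => none
  effB := fun b => match b with
    | .sgt => some .anyChange | .st => some .anyChange | _ => none
  effN := fun v => match v with | .cg => some .dec | .cr => none

/-- `r6 = {cg=0, cr>0, st} ↦ {cr↓, sgt?, st?}`. -/
def r6 : SketchRule BF NF where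
  condB := fun b => match b with | .st => some .isTrue | _ => none
  condN := fun v => match v with | .cg => some .eq0 | .cr => some .gt0
  effB := fun b => match b with
    | .sgt => some .anyChange | .st => some .anyChange | _ => none
  effN := fun v => match v with | .cg => none | .cr => some .dec

def sketch : Set (SketchRule BF NF) := {r1, r2, r3, r4, r5, r6}

end Childsnack
namespace ChildsnackAux
open Childsnack
open PlanningProblem (RReachable)

variable {I : Inst}

theorem exec_nil_iff {P : PlanningProblem} {s s' : P.State} :
    P.Exec s [] s' ↔ s' = s := by
  constructor
  · rintro h; cases h; rfl
  · rintro rfl; exact PlanningProblem.Exec.nil _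

theorem exec_cons_iff {P : PlanningProblem} {s s' : P.State} {a : P.Action}
    {π : List P.Action} :
    P.Exec s (a :: π) s' ↔ a ∈ P.applicable s ∧ P.Exec (P.succ s a) π s' := by
  constructor
  · rintro h; cases h with | cons h1 h2 => exact ⟨h1, h2⟩
  · rintro ⟨h1, h2⟩; exact .cons h1 h2

theorem exec_append {P : PlanningProblem} {s s' s'' : P.State}
    {π π' : List P.Action} (h : P.Exec s π s') (h' : P.Exec s' π' s'') :
    P.Exec s (π ++ π') s'' := by
  induction h with
  | nil => exact h'
  | cons h1 _ ih => exact .cons h1 (ih h')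

/-- State invariants of reachable Childsnack states. -/
def Good (I : Inst) (s : (toProblem I).State) : Prop :=
  (∀ t : Fin I.ntrays, ∃ p, s (.trayAt t p) = true) ∧
  (∀ (t : Fin I.ntrays) (p p' : Place I),
    s (.trayAt t p) = true → s (.trayAt t p') = true → p = p') ∧
  (∀ sd, s (.notexist sd) = true →
    s (.atKitchenSandwich sd) = false ∧ ∀ t, s (.ontray sd t) = false)

theorem good_init : Good I (init I) := by
  refine ⟨fun t => ⟨I.tray0 t, by simp [Childsnack.init]⟩, fun t p p' hp hp' => ?_, fun sd _ => ⟨rfl, fun t => rfl⟩⟩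
  simp [Childsnack.init] at hp hp'
  rw [← hp, ← hp']

theorem good_succ {s : (toProblem I).State} {a : Act I}
    (ha : pre I s a) (hg : Good I s) : Good I (succ I s a) := by
  obtain ⟨hg1, hg2, hg3⟩ := hg
  cases a with
  | makeGF sd b c =>
    obtain ⟨_, _, _, _, hne⟩ := ha
    refine ⟨fun t => ?_, fun t p p' hp hp' => ?_, fun sd' h => ?_⟩
    · obtain ⟨p, hp⟩ := hg1 t; exact ⟨p, by simpa [Childsnack.succ] using hp⟩
    · simp [Childsnack.succ] at hp hp'; exact hg2 t p p' hp hp'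
    · simp only [Childsnack.succ] at h ⊢
      by_cases hsd : sd' = sd
      · subst hsd; simp at h
      · simp [hsd] at h ⊢
        exact ⟨(hg3 sd' h).1, fun t => (hg3 sd' h).2 t⟩
  | make sd b c =>
    obtain ⟨_, _, hne⟩ := ha
    refine ⟨fun t => ?_, fun t p p' hp hp' => ?_, fun sd' h => ?_⟩
    · obtain ⟨p, hp⟩ := hg1 t; exact ⟨p, by simpa [Childsnack.succ] using hp⟩
    · simp [Childsnack.succ] at hp hp'; exact hg2 t p p' hp hp'
    · simp only [Childsnack.succ] at h ⊢
      by_cases hsd : sd' = sd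
      · subst hsd; simp at h
      · simp [hsd] at h ⊢
        exact ⟨(hg3 sd' h).1, fun t => (hg3 sd' h).2 t⟩
  | putOnTray sd t0 =>
    obtain ⟨hk, _⟩ := ha
    refine ⟨fun t => ?_, fun t p p' hp hp' => ?_, fun sd' h => ?_⟩
    · obtain ⟨p, hp⟩ := hg1 t; exact ⟨p, by simpa [Childsnack.succ] using hp⟩
    · simp [Childsnack.succ] at hp hp'; exact hg2 t p p' hp hp'
    · simp only [Childsnack.succ] at h ⊢
      by_cases hsd : sd' = sd
      · subst hsd
        have := (hg3 _ h).1
        rw [this] at hk; exact absurd hk (by simp)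
      · simp [hsd]
        exact ⟨(hg3 sd' h).1, fun t => (hg3 sd' h).2 t⟩
  | serveGF sd t0 ch =>
    refine ⟨fun t => ?_, fun t p p' hp hp' => ?_, fun sd' h => ?_⟩
    · obtain ⟨p, hp⟩ := hg1 t; exact ⟨p, by simpa [Childsnack.succ] using hp⟩
    · simp [Childsnack.succ] at hp hp'; exact hg2 t p p' hp hp'
    · simp only [Childsnack.succ] at h ⊢
      simp at h
      constructor
      · simpa using (hg3 sd' h).1
      · intro t
        by_cases hx : sd' = sd ∧ t = t0
        · obtain ⟨rfl, rfl⟩ := hx; simp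
        · have hne : (Atom.ontray sd' t : Atom I) ≠ .ontray sd t0 := by
            simp; intro h1 h2; exact hx ⟨h1, h2⟩
          simpa [hne] using (hg3 sd' h).2 t
  | serve sd t0 ch =>
    refine ⟨fun t => ?_, fun t p p' hp hp' => ?_, fun sd' h => ?_⟩
    · obtain ⟨p, hp⟩ := hg1 t; exact ⟨p, by simpa [Childsnack.succ] using hp⟩
    · simp [Childsnack.succ] at hp hp'; exact hg2 t p p' hp hp'
    · simp only [Childsnack.succ] at h ⊢
      simp at h
      constructor
      · simpa using (hg3 sd' h).1
      · intro t
        by_cases hx : sd' = sd ∧ t = t0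
        · obtain ⟨rfl, rfl⟩ := hx; simp
        · have hne : (Atom.ontray sd' t : Atom I) ≠ .ontray sd t0 := by
            simp; intro h1 h2; exact hx ⟨h1, h2⟩
          simpa [hne] using (hg3 sd' h).2 t
  | moveTray t0 p1 p2 =>
    refine ⟨fun t => ?_, fun t p p' hp hp' => ?_, fun sd' h => ?_⟩
    · by_cases ht : t = t0
      · subst ht; exact ⟨p2, by simp [Childsnack.succ]⟩
      · obtain ⟨p, hp⟩ := hg1 t
        refine ⟨p, ?_⟩
        simp only [Childsnack.succ]
        rw [if_neg (by simp; intro h1; exact absurd h1 ht),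
            if_neg (by simp; intro h1; exact absurd h1 ht)]
        exact hp
    · simp only [Childsnack.succ] at hp hp'
      by_cases h2 : (Atom.trayAt t p : Atom I) = .trayAt t0 p2 <;>
        by_cases h2' : (Atom.trayAt t p' : Atom I) = .trayAt t0 p2
      · simp at h2 h2'; rw [h2.2, h2'.2]
      · rw [if_pos h2] at hp; rw [if_neg h2'] at hp'
        simp at h2; obtain ⟨rfl, rfl⟩ := h2
        by_cases h1' : (Atom.trayAt t p' : Atom I) = .trayAt t p1
        · rw [if_pos h1'] at hp'; exact absurd hp' (by simp)
        · rw [if_neg h1'] at hp'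
          have := hg2 t p' p1 hp' ha
          simp at h1'
          exact absurd this h1'
      · rw [if_neg h2] at hp; rw [if_pos h2'] at hp'
        simp at h2'; obtain ⟨rfl, rfl⟩ := h2'
        by_cases h1 : (Atom.trayAt t p : Atom I) = .trayAt t p1
        · rw [if_pos h1] at hp; exact absurd hp (by simp)
        · rw [if_neg h1] at hp
          have := hg2 t p p1 hp ha
          simp at h1
          exact absurd this h1
      · rw [if_neg h2] at hp; rw [if_neg h2'] at hp'
        by_cases h1 : (Atom.trayAt t p : Atom I) = .trayAt t0 p1
        · rw [if_pos h1] at hp; exact absurd hp (by simp)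
        · by_cases h1' : (Atom.trayAt t p' : Atom I) = .trayAt t0 p1
          · rw [if_pos h1'] at hp'; exact absurd hp' (by simp)
          · rw [if_neg h1] at hp; rw [if_neg h1'] at hp'
            exact hg2 t p p' hp hp'
    · simp only [Childsnack.succ] at h ⊢
      simp at h
      refine ⟨(hg3 sd' h).1, fun t => ?_⟩
      simpa using (hg3 sd' h).2 t

theorem good_exec {s s' : (toProblem I).State} {π : List (Act I)}
    (h : (toProblem I).Exec s π s') (hg : Good I s) : Good I s' := by
  induction h with
  | nil => exact hg
  | cons h1 _ ih => exact ih (good_succ h1 hg)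

theorem good_reachable {s : (toProblem I).State}
    (h : RReachable (toProblem I) (feat I) sketch s) : Good I s := by
  induction h with
  | init => exact good_init
  | step _ _ _ hexec _ ih => exact good_exec hexec ih

end ChildsnackAux
namespace ChildsnackAux
open Childsnack

variable {I : Inst}

theorem feat_cg (s : (toProblem I).State) :
    (feat I s).num NF.cg
      = Set.ncard {ch : Fin I.nchildren | I.allergic ch = true ∧ s (.served ch) = false} := rfl

theorem feat_sgt_iff {s : (toProblem I).State} :
    (feat I s).bool BF.sgt = true ↔
      ∃ sd t, s (.ontray sd t) = true ∧ s (.noGluten sd) = true := by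
  simp only [feat]
  split_ifs with h
  · simpa using h
  · simpa using h

/-- If a state `s2` agrees with `s` everywhere relevant except that one
additional allergic child `ch` is served, then `s2` is a `G_{r5}(s)` state. -/
theorem mem_G {s s2 : (toProblem I).State} {ch : Fin I.nchildren}
    (hall : I.allergic ch = true) (hns : s (.served ch) = false)
    (hserved : ∀ c, s2 (.served c) = if c = ch then true else s (.served c))
    (hk : ∀ sd, s2 (.atKitchenSandwich sd) = s (.atKitchenSandwich sd))
    (hg : ∀ sd, s2 (.noGluten sd) = s (.noGluten sd)) :
    (feat I s2).num NF.cg < (feat I s).num NF.cg ∧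
    (feat I s2).num NF.cr = (feat I s).num NF.cr ∧
    (feat I s2).bool BF.sgk = (feat I s).bool BF.sgk ∧
    (feat I s2).bool BF.sk = (feat I s).bool BF.sk := by
  refine ⟨?_, ?_, ?_, ?_⟩
  · have hset : {c : Fin I.nchildren | I.allergic c = true ∧ s2 (.served c) = false}
        = {c : Fin I.nchildren | I.allergic c = true ∧ s (.served c) = false} \ {ch} := by
      ext c
      by_cases hc : c = ch
      · subst hc; simp [hserved]
      · simp [hserved, hc]
    rw [feat_cg, feat_cg, hset]
    apply Set.ncard_lt_ncard
    · rw [Set.ssubset_iff_of_subset Set.diff_subset]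
      exact ⟨ch, ⟨hall, hns⟩, by simp⟩
    · exact Set.toFinite _
  · show Set.ncard _ = Set.ncard _
    congr 1
    ext c
    by_cases hc : c = ch
    · subst hc; simp [hall]
    · simp [hserved, hc]
  · show (if _ then _ else _) = (if _ then _ else _)
    simp only [hk, hg]
  · show (if _ then _ else _) = (if _ then _ else _)
    simp only [hk]

/-- Inversion: the only applicable action that newly serves the allergic child
`ch` is a `serveGF` for `ch`. -/
theorem serve_inv {s : (toProblem I).State} {a : Act I} {ch : Fin I.nchildren}
    (ha : pre I s a) (hall : I.allergic ch = true)
    (h0 : s (.served ch) = false) (h1 : succ I s a (.served ch) = true) :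
    ∃ sd t, a = .serveGF sd t ch ∧ pre I s (.serveGF sd t ch) := by
  cases a with
  | makeGF sd b c => simp [Childsnack.succ, h0] at h1
  | make sd b c => simp [Childsnack.succ, h0] at h1
  | putOnTray sd t => simp [Childsnack.succ, h0] at h1
  | moveTray t p1 p2 => simp [Childsnack.succ, h0] at h1
  | serveGF sd t ch' =>
    by_cases hc : ch = ch'
    · subst hc; exact ⟨sd, t, rfl, ha⟩
    · simp [Childsnack.succ, h0, hc] at h1
  | serve sd t ch' =>
    by_cases hc : ch = ch'
    · subst hc; exact absurd ha.1 (by simp [hall])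
    · simp [Childsnack.succ, h0, hc] at h1

/-- Inversion: the only applicable action that newly puts tray `t` at place `p`
is a `moveTray` of `t` to `p`. -/
theorem trayAt_inv {s : (toProblem I).State} {a : Act I} {t : Fin I.ntrays}
    {p : Place I} (ha : pre I s a)
    (h0 : s (.trayAt t p) = false) (h1 : succ I s a (.trayAt t p) = true) :
    ∃ p1, a = .moveTray t p1 p ∧ s (.trayAt t p1) = true := by
  cases a with
  | makeGF sd b c => simp [Childsnack.succ, h0] at h1
  | make sd b c => simp [Childsnack.succ, h0] at h1
  | putOnTray sd t' => simp [Childsnack.succ, h0] at h1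
  | serveGF sd t' ch => simp [Childsnack.succ, h0] at h1
  | serve sd t' ch => simp [Childsnack.succ, h0] at h1
  | moveTray t' p1 p2 =>
    by_cases h2 : (Atom.trayAt t p : Atom I) = .trayAt t' p2
    · simp at h2
      obtain ⟨rfl, rfl⟩ := h2
      exact ⟨p1, rfl, ha⟩
    · by_cases h3 : (Atom.trayAt t p : Atom I) = .trayAt t' p1
      · simp only [Childsnack.succ, if_neg h2, if_pos h3] at h1
        exact absurd h1 (by simp)
      · simp only [Childsnack.succ, if_neg h2, if_neg h3, h0] at h1
        exact absurd h1 (by simp)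

end ChildsnackAux
namespace ChildsnackAux
open Childsnack

variable {I : Inst}

theorem wig_succ (s0 : (toProblem I).State) (G : Set ((toProblem I).State)) :
    ((toProblem I).withInitGoal s0 G).succ = Childsnack.succ I := rfl

theorem wig_init (s0 : (toProblem I).State) (G : Set ((toProblem I).State)) :
    ((toProblem I).withInitGoal s0 G).init = s0 := rfl

theorem wig_goal (s0 : (toProblem I).State) (G : Set ((toProblem I).State)) :
    ((toProblem I).withInitGoal s0 G).goal = G := rfl

theorem wig_app {s0 : (toProblem I).State} {G : Set ((toProblem I).State)}
    {st : (toProblem I).State} {a : Act I} :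
    a ∈ ((toProblem I).withInitGoal s0 G).applicable st ↔ pre I st a := Iff.rfl

theorem main (I : Inst) (s : (Childsnack.toProblem I).State)
    (hreach : PlanningProblem.RReachable (Childsnack.toProblem I)
      (Childsnack.feat I) Childsnack.sketch s)
    (hcg : 0 < (Childsnack.feat I s).num Childsnack.NF.cg)
    (hsgt : (Childsnack.feat I s).bool Childsnack.BF.sgt = true) :
    ((Childsnack.toProblem I).withInitGoal s
        {s' | (Childsnack.feat I s').num Childsnack.NF.cg <
                (Childsnack.feat I s).num Childsnack.NF.cg ∧
              (Childsnack.feat I s').num Childsnack.NF.cr =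
                (Childsnack.feat I s).num Childsnack.NF.cr ∧
              (Childsnack.feat I s').bool Childsnack.BF.sgk =
                (Childsnack.feat I s).bool Childsnack.BF.sgk ∧
              (Childsnack.feat I s').bool Childsnack.BF.sk =
                (Childsnack.feat I s).bool Childsnack.BF.sk}).width ≤ 1 := by
  classical
  obtain ⟨hg1, hg2, hg3⟩ := good_reachable hreach
  set G : Set ((Childsnack.toProblem I).State) :=
    {s' | (Childsnack.feat I s').num Childsnack.NF.cg <
            (Childsnack.feat I s).num Childsnack.NF.cg ∧
          (Childsnack.feat I s').num Childsnack.NF.cr =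
            (Childsnack.feat I s).num Childsnack.NF.cr ∧
          (Childsnack.feat I s').bool Childsnack.BF.sgk =
            (Childsnack.feat I s).bool Childsnack.BF.sgk ∧
          (Childsnack.feat I s').bool Childsnack.BF.sk =
            (Childsnack.feat I s).bool Childsnack.BF.sk} with hGdef
  set P' := (Childsnack.toProblem I).withInitGoal s G with hP'def
  -- extract an unserved allergic child
  rw [feat_cg] at hcg
  obtain ⟨ch, hall, hns⟩ := (Set.ncard_pos (Set.toFinite _)).mp hcg
  -- extract a gluten-free sandwich on a tray
  obtain ⟨sd, t, hontray, hng⟩ := feat_sgt_iff.mp hsgt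
  -- a serveGF action always leads to a goal state
  have hserveG : ∀ (s1 : (toProblem I).State) (sd' : Fin I.nsandwiches)
      (t' : Fin I.ntrays) (ch' : Fin I.nchildren),
      pre I s1 (.serveGF sd' t' ch') →
      (∀ c, s1 (.served c) = s (.served c)) →
      (∀ x, s1 (.atKitchenSandwich x) = s (.atKitchenSandwich x)) →
      (∀ x, s1 (.noGluten x) = s (.noGluten x)) →
      Childsnack.succ I s1 (.serveGF sd' t' ch') ∈ G := by
    intro s1 sd' t' ch' hpre hfs hfk hfg
    obtain ⟨ha1, ha2, ha3, ha4, ha5⟩ := hpre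
    rw [hGdef]
    refine mem_G ha1 ((hfs ch').symm.trans ha5) (fun c => ?_) (fun x => ?_) (fun x => ?_)
    · by_cases hc : c = ch' <;> simp [Childsnack.succ, hc, hfs]
    · simp [Childsnack.succ, hfk]
    · simp [Childsnack.succ, hfg]
  -- a 1-step plan from a directly servable child
  have hCAshort : (∃ (ch' : Fin I.nchildren) (sd' : Fin I.nsandwiches)
      (t' : Fin I.ntrays), I.allergic ch' = true ∧ s (.served ch') = false ∧
      s (.ontray sd' t') = true ∧ s (.noGluten sd') = true ∧
      s (.trayAt t' (some (I.seat ch'))) = true) →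
      ∃ π, P'.PlanFromFor P'.init P'.goal π ∧ π.length ≤ 1 := by
    rintro ⟨ch', sd', t', h1, h2, h3, h4, h5⟩
    refine ⟨[.serveGF sd' t' ch'],
      ⟨Childsnack.succ I s (.serveGF sd' t' ch'), ?_, ?_⟩, Nat.le_refl 1⟩
    · exact .cons (wig_app.mpr ⟨h1, h3, h4, h5, h2⟩) (.nil _)
    · exact hserveG s sd' t' ch' ⟨h1, h3, h4, h5, h2⟩
        (fun _ => rfl) (fun _ => rfl) (fun _ => rfl)
  by_cases hA : ∃ (ch' : Fin I.nchildren) (sd' : Fin I.nsandwiches)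
      (t' : Fin I.ntrays), I.allergic ch' = true ∧ s (.served ch') = false ∧
      s (.ontray sd' t') = true ∧ s (.noGluten sd') = true ∧
      s (.trayAt t' (some (I.seat ch'))) = true
  · -- a 1-step plan exists, so the width is 0
    obtain ⟨π0, hπ0, hlen0⟩ := hCAshort hA
    unfold PlanningProblem.width
    split_ifs with h1 h2
    · exact Nat.zero_le 1
    · exact absurd ⟨π0, hπ0, hlen0⟩ h2
    · exact absurd (⟨π0, hπ0⟩ : P'.Solvable) h1
  · -- no child is directly servable
    have hstb : s (.trayAt t (some (I.seat ch))) = false := by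
      by_contra h
      simp only [Bool.not_eq_false] at h
      exact hA ⟨ch, sd, t, hall, hns, hontray, hng, h⟩
    obtain ⟨p, hp⟩ := hg1 t
    -- the concrete 2-step plan
    have hpre0 : pre I s (.moveTray t p (some (I.seat ch))) := hp
    have hs1tray : Childsnack.succ I s (.moveTray t p (some (I.seat ch)))
        (.trayAt t (some (I.seat ch))) = true := by simp [Childsnack.succ]
    have hs1frame : ∀ x : Atom I, (∀ t' p', x ≠ .trayAt t' p') →
        ∀ (t1 : Fin I.ntrays) (p1 p2 : Place I),
        Childsnack.succ I s (.moveTray t1 p1 p2) x = s x := by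
      intro x hx t1 p1 p2
      simp only [Childsnack.succ]
      rw [if_neg (hx t1 p2), if_neg (hx t1 p1)]
    have hpre1 : pre I (Childsnack.succ I s (.moveTray t p (some (I.seat ch))))
        (.serveGF sd t ch) := by
      refine ⟨hall, ?_, ?_, hs1tray, ?_⟩
      · rw [hs1frame _ (by simp) t p _]; exact hontray
      · rw [hs1frame _ (by simp) t p _]; exact hng
      · rw [hs1frame _ (by simp) t p _]; exact hns
    have h2exec : P'.Exec P'.init
        [.moveTray t p (some (I.seat ch)), .serveGF sd t ch]
        (Childsnack.succ I (Childsnack.succ I s (.moveTray t p (some (I.seat ch))))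
          (.serveGF sd t ch)) :=
      .cons (wig_app.mpr hpre0) (.cons (wig_app.mpr hpre1) (.nil _))
    have h2served : (Childsnack.succ I
        (Childsnack.succ I s (.moveTray t p (some (I.seat ch))))
        (.serveGF sd t ch)) (.served ch) = true := by simp [Childsnack.succ]
    have h2goal : (Childsnack.succ I
        (Childsnack.succ I s (.moveTray t p (some (I.seat ch))))
        (.serveGF sd t ch)) ∈ G := by
      refine hserveG _ sd t ch hpre1 ?_ ?_ ?_
      · intro c; rw [hs1frame _ (by simp) t p _]
      · intro x; rw [hs1frame _ (by simp) t p _]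
      · intro x; rw [hs1frame _ (by simp) t p _]
    -- every plan achieving (served ch) has length at least 2
    have hlen2 : ∀ π', P'.PlanFromFor P'.init
        (P'.TupleStates {Atom.served ch}) π' → 2 ≤ π'.length := by
      rintro π' ⟨s'', hex, hmem⟩
      have hmem' : s'' (.served ch) = true := by
        exact hmem _ (Finset.mem_singleton_self _)
      match π' with
      | [] =>
        rw [exec_nil_iff] at hex
        rw [hex, show P'.init = s from rfl, hns] at hmem'
        exact absurd hmem' (by simp)
      | [b1] =>
        exfalso
        rw [exec_cons_iff] at hex
        obtain ⟨hb1, hex⟩ := hex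
        rw [exec_nil_iff] at hex
        subst hex
        obtain ⟨sd1, t1, rfl, hpre⟩ := serve_inv (wig_app.mp hb1) hall hns hmem'
        exact hA ⟨ch, sd1, t1, hpre.1, hpre.2.2.2.2, hpre.2.1, hpre.2.2.1,
          hpre.2.2.2.1⟩
      | b1 :: b2 :: rest => simp
    -- membership of states in tuple sets
    have htuple : ∀ (st : (toProblem I).State) (x : Atom I),
        st x = true → st ∈ P'.TupleStates {x} := by
      intro st x hx y hy
      have hyx : y = x := Finset.mem_singleton.mp hy
      subst hyx; exact hx
    unfold PlanningProblem.width
    split_ifs with h1 h2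
    · exact Nat.zero_le 1
    rotate_right
    · exact absurd (⟨_, _, h2exec, h2goal⟩ : P'.Solvable) h1
    · -- build the admissible chain of width 1
      refine Nat.sInf_le ⟨2,
        (fun i => match i with
          | 0 => (∅ : Finset (Atom I))
          | 1 => {Atom.trayAt t (some (I.seat ch))}
          | _ + 2 => {Atom.served ch}), ?_, ?_, ?_, ?_⟩
      · -- tuple sizes
        intro i _
        match i with
        | 0 => exact (Finset.card_empty).trans_le (Nat.zero_le 1)
        | 1 => exact Nat.le_of_eq (Finset.card_singleton _)
        | n + 2 => exact Nat.le_of_eq (Finset.card_singleton _)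
      · -- t₀ holds initially
        intro a ha
        exact absurd ha (Finset.notMem_empty a)
      · -- chain steps
        intro i hi π hopt
        interval_cases i
        · -- step from t₀ to t₁
          have hπnil : π = [] := by
            have := hopt.2 [] ⟨P'.init, .nil _, fun a ha =>
              absurd ha (Finset.notMem_empty a)⟩
            exact List.length_eq_zero_iff.mp (Nat.le_zero.mp this)
          subst hπnil
          refine ⟨.moveTray t p (some (I.seat ch)),
            ⟨_, .cons (wig_app.mpr hpre0) (.nil _), htuple _ _ hs1tray⟩, ?_⟩
          rintro π' ⟨s'', hex, hmem⟩
          have hmem' : s'' (.trayAt t (some (I.seat ch))) = true := by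
            exact hmem _ (Finset.mem_singleton_self _)
          match π' with
          | [] =>
            rw [exec_nil_iff] at hex
            rw [hex, show P'.init = s from rfl, hstb] at hmem'
            exact absurd hmem' (by simp)
          | b1 :: rest => show 1 ≤ rest.length + 1; omega
        · -- step from t₁ to t₂
          obtain ⟨⟨s1', hex, hmem⟩, hmin⟩ := hopt
          have hmem' : s1' (.trayAt t (some (I.seat ch))) = true := by
            exact hmem _ (Finset.mem_singleton_self _)
          have hlen1 : π.length = 1 := by
            have hle : π.length ≤ 1 := hmin [.moveTray t p (some (I.seat ch))]
              ⟨_, .cons (wig_app.mpr hpre0) (.nil _), htuple _ _ hs1tray⟩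
            have hge : π ≠ [] := by
              rintro rfl
              rw [exec_nil_iff] at hex
              rw [hex, show P'.init = s from rfl, hstb] at hmem'
              exact absurd hmem' (by simp)
            cases π with
            | nil => exact absurd rfl hge
            | cons a l => simpa using hle
          obtain ⟨b, rfl⟩ := List.length_eq_one_iff.mp hlen1
          rw [exec_cons_iff] at hex
          obtain ⟨hb, hex⟩ := hex
          rw [exec_nil_iff] at hex
          subst hex
          obtain ⟨p1, rfl, hp1⟩ := trayAt_inv (wig_app.mp hb) hstb hmem'
          have hpre1' : pre I (Childsnack.succ I s
              (.moveTray t p1 (some (I.seat ch)))) (.serveGF sd t ch) := by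
            refine ⟨hall, ?_, ?_, hmem', ?_⟩
            · rw [hs1frame _ (by simp) t p1 _]; exact hontray
            · rw [hs1frame _ (by simp) t p1 _]; exact hng
            · rw [hs1frame _ (by simp) t p1 _]; exact hns
          refine ⟨.serveGF sd t ch,
            ⟨_, .cons hb (.cons (wig_app.mpr hpre1') (.nil _)),
              htuple (Childsnack.succ I (Childsnack.succ I s
                  (.moveTray t p1 (some (I.seat ch)))) (.serveGF sd t ch)) _
                (by simp [Childsnack.succ])⟩, ?_⟩
          intro π' hπ'
          exact hlen2 π' hπ'
      · -- optimal plans for t₂ are optimal plans for the subproblem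
        rintro π ⟨⟨s'', hex, hmem⟩, hmin⟩
        have hmem' : s'' (.served ch) = true := by
          exact hmem _ (Finset.mem_singleton_self _)
        have hlen : π.length = 2 := by
          have hle : π.length ≤ 2 := by
            exact hmin [.moveTray t p (some (I.seat ch)), .serveGF sd t ch]
              ⟨_, h2exec, htuple _ _ h2served⟩
          have hge := hlen2 π ⟨s'', hex, hmem⟩
          omega
        obtain ⟨b0, b1, rfl⟩ := List.length_eq_two.mp hlen
        rw [exec_cons_iff] at hex
        obtain ⟨hb0, hex⟩ := hex
        rw [exec_cons_iff] at hex
        obtain ⟨hb1, hex⟩ := hex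
        rw [exec_nil_iff] at hex
        subst hex
        -- the first action does not serve ch
        have h1served : Childsnack.succ I s b0 (.served ch) = false := by
          by_contra h
          simp only [Bool.not_eq_false] at h
          obtain ⟨sd1, t1, rfl, hpre⟩ := serve_inv (wig_app.mp hb0) hall hns h
          exact hA ⟨ch, sd1, t1, hpre.1, hpre.2.2.2.2, hpre.2.1, hpre.2.2.1,
            hpre.2.2.2.1⟩
        -- the second action is a serveGF for ch
        obtain ⟨sd2, t2, rfl, hpre2⟩ :=
          serve_inv (wig_app.mp hb1) hall h1served hmem'
        obtain ⟨-, h1ontray, h1ng, h1tray, -⟩ := hpre2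
        rw [show P'.succ P'.init b0 = Childsnack.succ I s b0 from rfl]
          at h1ontray h1ng h1tray
        -- the first action must be a moveTray
        have hb0' := wig_app.mp hb0
        cases b0 with
        | makeGF sd1 b c =>
          exfalso
          obtain ⟨-, -, -, -, hne⟩ := hb0'
          by_cases hsd : sd2 = sd1
          · subst hsd
            have hfalse := (hg3 sd2 hne).2 t2
            have : s (.ontray sd2 t2) = true := by
              simpa [Childsnack.succ] using h1ontray
            rw [hfalse] at this; exact absurd this (by simp)
          · exact hA ⟨ch, sd2, t2, hall, hns,
              by simpa [Childsnack.succ] using h1ontray,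
              by simpa [Childsnack.succ, hsd] using h1ng,
              by simpa [Childsnack.succ] using h1tray⟩
        | make sd1 b c =>
          exact absurd (hA ⟨ch, sd2, t2, hall, hns,
            by simpa [Childsnack.succ] using h1ontray,
            by simpa [Childsnack.succ] using h1ng,
            by simpa [Childsnack.succ] using h1tray⟩) (by simp)
        | putOnTray sd1 t1 =>
          exfalso
          have hkt : s (.trayAt t1 none) = true := hb0'.2
          have htray : s (.trayAt t2 (some (I.seat ch))) = true := by
            simpa [Childsnack.succ] using h1tray
          by_cases hx : sd2 = sd1 ∧ t2 = t1
          · obtain ⟨rfl, rfl⟩ := hx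
            have := hg2 t2 none (some (I.seat ch)) hkt htray
            exact absurd this (by simp)
          · have hne : (Atom.ontray sd2 t2 : Atom I) ≠ .ontray sd1 t1 := by
              simp; intro hh1 hh2; exact hx ⟨hh1, hh2⟩
            exact hA ⟨ch, sd2, t2, hall, hns,
              by simpa [Childsnack.succ, hne] using h1ontray,
              by simpa [Childsnack.succ] using h1ng, htray⟩
        | serveGF sd1 t1 ch1 =>
          exact absurd (hA ⟨ch1, sd1, t1, hb0'.1, hb0'.2.2.2.2, hb0'.2.1,
            hb0'.2.2.1, hb0'.2.2.2.1⟩) (by simp)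
        | serve sd1 t1 ch1 =>
          exfalso
          by_cases hx : sd2 = sd1 ∧ t2 = t1
          · obtain ⟨rfl, rfl⟩ := hx
            have : Childsnack.succ I s (.serve sd2 t2 ch1) (.ontray sd2 t2)
                = false := by simp [Childsnack.succ]
            rw [this] at h1ontray; exact absurd h1ontray (by simp)
          · have hne : (Atom.ontray sd2 t2 : Atom I) ≠ .ontray sd1 t1 := by
              simp; intro hh1 hh2; exact hx ⟨hh1, hh2⟩
            exact hA ⟨ch, sd2, t2, hall, hns,
              by simpa [Childsnack.succ, hne] using h1ontray,
              by simpa [Childsnack.succ] using h1ng,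
              by simpa [Childsnack.succ] using h1tray⟩
        | moveTray t1 p1 p2 =>
          -- the genuine case: the resulting state is a subgoal state
          constructor
          · refine ⟨_, .cons hb0 (.cons hb1 (.nil _)), ?_⟩
            exact hserveG _ sd2 t2 ch ⟨hall, h1ontray, h1ng, h1tray, h1served⟩
              (fun c => hs1frame (Atom.served c) (by simp) t1 p1 p2)
              (fun x => hs1frame (Atom.atKitchenSandwich x) (by simp) t1 p1 p2)
              (fun x => hs1frame (Atom.noGluten x) (by simp) t1 p1 p2)
          · intro π'' hπ''
            by_contra hcon
            push_neg at hcon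
            have hcon2 : π''.length < 2 := hcon
            exact h2 ⟨π'', hπ'', by omega⟩

end ChildsnackAux

/-- **Theorem.** For every Childsnack instance `P` and every `R`-reachable state
`s` of `P` in which `cg(s) > 0` and `sgt(s) = true` (there is an unserved
gluten-allergic child and a gluten-free sandwich on a tray), the planning
problem that is like `P` but with initial state `s` and with goal states
`G_{r5}(s) = { s' : cg(s') < cg(s), cr(s') = cr(s), sgk(s') = sgk(s),
sk(s') = sk(s) }` has width at most `1`. -/
theorem childsnack_r5_subproblem_width_le_one (I : Childsnack.Inst)
    (s : (Childsnack.toProblem I).State)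
    (hreach : PlanningProblem.RReachable (Childsnack.toProblem I)
      (Childsnack.feat I) Childsnack.sketch s)
    (hcg : 0 < (Childsnack.feat I s).num Childsnack.NF.cg)
    (hsgt : (Childsnack.feat I s).bool Childsnack.BF.sgt = true) :
    ((Childsnack.toProblem I).withInitGoal s
        {s' | (Childsnack.feat I s').num Childsnack.NF.cg <
                (Childsnack.feat I s).num Childsnack.NF.cg ∧
              (Childsnack.feat I s').num Childsnack.NF.cr =
                (Childsnack.feat I s).num Childsnack.NF.cr ∧
              (Childsnack.feat I s').bool Childsnack.BF.sgk =
                (Childsnack.feat I s).bool Childsnack.BF.sgk ∧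
              (Childsnack.feat I s').bool Childsnack.BF.sk =
                (Childsnack.feat I s).bool Childsnack.BF.sk}).width ≤ 1 := by
  exact ChildsnackAux.main I s hreach hcg hsgt
end

section
/- There is no infinite sequence (p_i, t_i, dg_i, dt_i, b_i, l_i) of tuples in ℕ × ℕ × ℕ × ℕ × Bool × Bool such that for every i one of the following holds: (rule r1) p_i > 0, b_i = false, b_(i+1) = true, p, t, l unchanged (dg, dt arbitrary); (rule r2) p_i > 0, l_i = false, l_(i+1) = true, p, b unchanged (t, dg, dt arbitrary); (rule r3) p_i > 0, p_(i+1) < p_i, b unchanged (t, dg, dt, l arbitrary); (rule r4) p_i = 0, t_i > 0, dt_i > 0, dt_(i+1) < dt_i, p, t, l unchanged (dg, b arbitrary); (rule r5) p_i = 0, t_i > 0, dt_i = 0, t_(i+1) < t_i, p, b, l unchanged (dg, dt arbitrary); or (rule r6) p_i = 0, t_i = 0, dg_i > 0, dg_(i+1) < dg_i, p, t, dt, l unchanged (b arbitrary). Hence the Driverlog sketch is terminating. -/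
/-- Termination of the Driverlog sketch with rules
`r1 = {p>0, ¬b} ↦ {dg?, dt?, b}`, `r2 = {p>0, ¬l} ↦ {t?, dg?, dt?, l}`,
`r3 = {p>0} ↦ {p↓, t?, dg?, dt?, l?}`, `r4 = {p=0, t>0, dt>0} ↦ {dg?, dt↓, b?}`,
`r5 = {p=0, t>0, dt=0} ↦ {t↓, dg?, dt?}` and `r6 = {p=0, t=0, dg>0} ↦ {dg↓, b?}`:
there is no infinite sequence of feature valuations
`(pᵢ, tᵢ, dgᵢ, dtᵢ, bᵢ, lᵢ)` in `ℕ × ℕ × ℕ × ℕ × Bool × Bool` in which every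
consecutive pair satisfies one of the six rules. -/
theorem driverlog_sketch_terminating :
    ¬ ∃ (p t dg dt : ℕ → ℕ) (b l : ℕ → Bool),
        ∀ i : ℕ,
          (0 < p i ∧ b i = false ∧ b (i + 1) = true ∧
            p (i + 1) = p i ∧ t (i + 1) = t i ∧ l (i + 1) = l i) ∨
          (0 < p i ∧ l i = false ∧ l (i + 1) = true ∧
            p (i + 1) = p i ∧ b (i + 1) = b i) ∨
          (0 < p i ∧ p (i + 1) < p i ∧ b (i + 1) = b i) ∨
          (p i = 0 ∧ 0 < t i ∧ 0 < dt i ∧ dt (i + 1) < dt i ∧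
            p (i + 1) = p i ∧ t (i + 1) = t i ∧ l (i + 1) = l i) ∨
          (p i = 0 ∧ 0 < t i ∧ dt i = 0 ∧ t (i + 1) < t i ∧
            p (i + 1) = p i ∧ b (i + 1) = b i ∧ l (i + 1) = l i) ∨
          (p i = 0 ∧ t i = 0 ∧ 0 < dg i ∧ dg (i + 1) < dg i ∧
            p (i + 1) = p i ∧ t (i + 1) = t i ∧ dt (i + 1) = dt i ∧
            l (i + 1) = l i) := by
  rintro ⟨p, t, dg, dt, b, l, h⟩
  -- the "boolean progress" measure, only relevant while `p > 0`
  set c : ℕ → ℕ := fun i =>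
    if p i = 0 then 0 else (cond (b i) 0 1) + (cond (l i) 0 1) with hc
  -- the lexicographic measure
  set μ : ℕ → ℕ ×ₗ (ℕ ×ₗ (ℕ ×ₗ (ℕ ×ₗ ℕ))) := fun i =>
    toLex (p i, toLex (c i, toLex (t i, toLex (dt i, dg i)))) with hμ
  have key : ∀ i, μ (i + 1) < μ i := by
    intro i
    have lex5 : ∀ a₁ a₂ b₁ b₂ c₁ c₂ d₁ d₂ e₁ e₂ : ℕ,
        (a₁ < a₂ ∨ (a₁ = a₂ ∧ (b₁ < b₂ ∨ (b₁ = b₂ ∧ (c₁ < c₂ ∨ (c₁ = c₂ ∧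
          (d₁ < d₂ ∨ (d₁ = d₂ ∧ e₁ < e₂)))))))) →
        (toLex (a₁, toLex (b₁, toLex (c₁, toLex (d₁, e₁)))) : ℕ ×ₗ (ℕ ×ₗ (ℕ ×ₗ (ℕ ×ₗ ℕ))))
          < toLex (a₂, toLex (b₂, toLex (c₂, toLex (d₂, e₂)))) := by
      intro a₁ a₂ b₁ b₂ c₁ c₂ d₁ d₂ e₁ e₂ H
      rcases H with H | ⟨rfl, H⟩
      · exact Prod.Lex.left _ _ H
      refine Prod.Lex.right _ ?_
      rcases H with H | ⟨rfl, H⟩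
      · exact Prod.Lex.left _ _ H
      refine Prod.Lex.right _ ?_
      rcases H with H | ⟨rfl, H⟩
      · exact Prod.Lex.left _ _ H
      refine Prod.Lex.right _ ?_
      rcases H with H | ⟨rfl, H⟩
      · exact Prod.Lex.left _ _ H
      · exact Prod.Lex.right _ H
    rcases h i with ⟨hp, hb, hb', hpe, hte, hle⟩ | ⟨hp, hl, hl', hpe, hbe⟩ |
      ⟨hp, hpd, hbe⟩ | ⟨hp, ht, hdt, hdtd, hpe, hte, hle⟩ |
      ⟨hp, ht, hdt, htd, hpe, hbe, hle⟩ | ⟨hp, ht, hdg, hdgd, hpe, hte, hdte, hle⟩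
    · apply lex5
      right
      refine ⟨hpe, Or.inl ?_⟩
      simp only [hc, hpe, hb, hb', hle]
      have : ¬ p i = 0 := by omega
      simp [this]
    · apply lex5
      right
      refine ⟨hpe, Or.inl ?_⟩
      simp only [hc, hpe, hl, hl', hbe]
      have : ¬ p i = 0 := by omega
      simp [this]
    · exact lex5 _ _ _ _ _ _ _ _ _ _ (Or.inl hpd)
    · apply lex5
      right
      refine ⟨hpe, Or.inr ⟨?_, Or.inr ⟨hte, Or.inl hdtd⟩⟩⟩
      simp [hc, hpe, hp]
    · apply lex5
      right
      refine ⟨hpe, Or.inr ⟨?_, Or.inl htd⟩⟩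
      simp [hc, hpe, hp]
    · apply lex5
      right
      refine ⟨hpe, Or.inr ⟨?_, Or.inr ⟨hte, Or.inr ⟨hdte, hdgd⟩⟩⟩⟩
      simp [hc, hpe, hp]
  -- no strictly descending sequence in a well-founded order
  have hwf : WellFoundedLT (ℕ ×ₗ (ℕ ×ₗ (ℕ ×ₗ (ℕ ×ₗ ℕ)))) := inferInstance
  obtain ⟨m, ⟨n, rfl⟩, hmin⟩ := hwf.wf.has_min (Set.range μ) ⟨μ 0, 0, rfl⟩
  exact hmin (μ (n + 1)) ⟨n + 1, rfl⟩ (key n)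
end

section
/- There is no infinite sequence (p1_i, p2_i, p3_i, h_i, o_i) of tuples in ℕ × ℕ × ℕ × ℕ × Bool such that for every i one of the following holds: (rule r1) p1_i > 0, p1_(i+1) < p1_i, o_(i+1) = true, h unchanged (p2, p3 arbitrary); (rule r2) p1_i = 0, p2_i > 0, p2_(i+1) < p2_i, o_(i+1) = true, p1, h unchanged (p3 arbitrary); (rule r3) p1_i = 0, p2_i = 0, p3_i > 0, p3_(i+1) < p3_i, o_(i+1) = true, p1, p2, h unchanged; or (rule r4) o_i = true, o_(i+1) = false, and p1, p2, p3, h unchanged. Hence the Schedule sketch is terminating. -/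
/-- Termination of the Schedule sketch with rules
`r1 = {p1>0} ↦ {p1↓, p2?, p3?, o}`, `r2 = {p1=0, p2>0} ↦ {p2↓, p3?, o}`,
`r3 = {p1=0, p2=0, p3>0} ↦ {p3↓, o}` and `r4 = {o} ↦ {¬o}` (the feature `h`
occurs in no rule, so every rule application keeps `h` constant):
there is no infinite sequence of feature valuations `(p1ᵢ, p2ᵢ, p3ᵢ, hᵢ, oᵢ)`
in `ℕ × ℕ × ℕ × ℕ × Bool` in which every consecutive pair satisfies one of
the four rules. -/
theorem schedule_sketch_terminating :
    ¬ ∃ (p1 p2 p3 h : ℕ → ℕ) (o : ℕ → Bool),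
        ∀ i : ℕ,
          (0 < p1 i ∧ p1 (i + 1) < p1 i ∧ o (i + 1) = true ∧
            h (i + 1) = h i) ∨
          (p1 i = 0 ∧ 0 < p2 i ∧ p2 (i + 1) < p2 i ∧ o (i + 1) = true ∧
            p1 (i + 1) = p1 i ∧ h (i + 1) = h i) ∨
          (p1 i = 0 ∧ p2 i = 0 ∧ 0 < p3 i ∧ p3 (i + 1) < p3 i ∧
            o (i + 1) = true ∧ p1 (i + 1) = p1 i ∧ p2 (i + 1) = p2 i ∧
            h (i + 1) = h i) ∨
          (o i = true ∧ o (i + 1) = false ∧ p1 (i + 1) = p1 i ∧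
            p2 (i + 1) = p2 i ∧ p3 (i + 1) = p3 i ∧ h (i + 1) = h i) := by
  rintro ⟨p1, p2, p3, h, o, H⟩
  set μ : ℕ → ℕ ×ₗ (ℕ ×ₗ (ℕ ×ₗ ℕ)) := fun i =>
    toLex (p1 i, toLex (p2 i, toLex (p3 i, cond (o i) 1 0)))
  have hdec : ∀ i, μ (i + 1) < μ i := by
    intro i
    simp only [μ]
    rcases H i with ⟨h0, h1, h2, _⟩ | ⟨h0, h1, h2, h3, h4, _⟩ |
      ⟨h0, h1, h2, h3, h4, h5, h6, _⟩ | ⟨h0, h1, h2, h3, h4, _⟩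
    · exact Prod.Lex.left _ _ h1
    · rw [show p1 (i+1) = p1 i from h4]
      exact Prod.Lex.right _ (Prod.Lex.left _ _ h2)
    · rw [show p1 (i+1) = p1 i from h5, show p2 (i+1) = p2 i from h6]
      exact Prod.Lex.right _ (Prod.Lex.right _ (Prod.Lex.left _ _ h3))
    · rw [show p1 (i+1) = p1 i from h2, show p2 (i+1) = p2 i from h3,
        show p3 (i+1) = p3 i from h4, h0, h1]
      exact Prod.Lex.right _ (Prod.Lex.right _ (Prod.Lex.right _ (by simp)))
  exact (RelEmbedding.natGT μ hdec).not_wellFounded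
    (wellFounded_lt)
end
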